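/- arXiv:1510.03896 — 5 statements merged into one kernel-verified Lean document; each statement's English description precedes it below -/
import Mathlib

section
/- Let (A, φ) be a non-commutative probability space, χ : {1,…,n} → {ℓ,r}, and [Z_{k;i,j}] ∈ M_d(A) for 1 ≤ k ≤ n. Set Z_k = L([Z_{k;i,j}]) if χ(k) = ℓ and Z_k = R([Z_{k;i,j}]) if χ(k) = r, where L and R are the left and right matrix multiplication operators on M_d(A). Then E_d(Z₁⋯Z_n) = Σ over all indices i₁,…,i_n, j₁,…,j_n in {1,…,d} of φ(Z_{1;i₁,j₁} ⋯ Z_{n;i_n,j_n}) · E_{i_{s_χ(1)}, j_{s_χ(1)}} ⋯ E_{i_{s_χ(n)}, j_{s_χ(n)}}. -/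
/-!
Write an element of `M_d(A)` as `Σ U ⊗ w` with `U ∈ M_d(ℂ)`, `w ∈ A`, i.e. as `Σ U.map (· • w)`.
Both `L(Z)` and `R(Z)` send `U ⊗ w` to `Σ_{x,y} U' ⊗ Z_{x,y} w`, where `U' = E_{x,y} U` for `L` and
`U' = U E_{x,y}` for `R`. Expanding `Z₁(Z₂(⋯ Zₙ(I_d)))` from the inside out, the `A`-word is
therefore always `Z_{1;i₁,j₁} ⋯ Z_{n;iₙ,jₙ}`, while the scalar units of the left factors are
stacked on the left in increasing order and those of the right factors on the right in decreasing
order: the scalar word is read along `s_χ`. The hypotheses on `s` say exactly that `k ↦ s k` is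
strictly increasing for a rank that is `k` on left indices and `2n - k` on right ones, and so is
the reading order, so the two orders agree.
-/

open Matrix

noncomputable section

variable {A : Type} [Ring A] [Algebra ℂ A]

/-- The left matrix-multiplication operator `L([Z])[T] = [Σ_k Z_{i,k} T_{k,j}] = Z * T`. -/
def Lop (d : ℕ) (Z : Matrix (Fin d) (Fin d) A) :
    Module.End ℂ (Matrix (Fin d) (Fin d) A) where
  toFun T := Z * T
  map_add' := by intros; simp [Matrix.mul_add]
  map_smul' := by intros; simp [Matrix.mul_smul]

/-- The right matrix-multiplication operator `R([Z])[T] = [Σ_k Z_{k,j} T_{i,k}]`. -/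
def Rop (d : ℕ) (Z : Matrix (Fin d) (Fin d) A) :
    Module.End ℂ (Matrix (Fin d) (Fin d) A) where
  toFun T := (Zᵀ * Tᵀ)ᵀ
  map_add' := by intros; simp [Matrix.transpose_add, Matrix.mul_add]
  map_smul' := by intros; simp [Matrix.transpose_smul, Matrix.mul_smul]

/-- `E_d(T) = [φ((T(I_d))_{i,j})]`. -/
def Ed (d : ℕ) (φ : A →ₗ[ℂ] ℂ) (T : Module.End ℂ (Matrix (Fin d) (Fin d) A)) :
    Matrix (Fin d) (Fin d) ℂ :=
  (T 1).map fun a => φ a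

theorem Fin.sum_univ_fun_succ {M α : Type*} [AddCommMonoid M] [Fintype α] {n : ℕ}
    (f : (Fin (n + 1) → α) → M) : ∑ i, f i = ∑ x, ∑ i, f (Fin.cons x i) := by
  rw [← (Fin.consEquiv fun _ => α).sum_comp f, Fintype.sum_prod_type]
  rfl

/-- The word `s_χ(1) ⋯ s_χ(n)`: the `ℓ`-indices increasing, then the `r`-indices decreasing. -/
def readingOrder {n : ℕ} (χ : Fin n → Bool) : List (Fin n) :=
  (List.finRange n).filter (χ ·) ++ ((List.finRange n).filter (!χ ·)).reverse

def readingRank {n : ℕ} (χ : Fin n → Bool) (k : Fin n) : ℕ :=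
  if χ k then k else 2 * n - k

theorem pairwise_readingRank_readingOrder {n : ℕ} (χ : Fin n → Bool) :
    (readingOrder χ).Pairwise (readingRank χ · < readingRank χ ·) := by
  refine List.pairwise_append.mpr ⟨?_, ?_, ?_⟩
  · refine ((List.pairwise_lt_finRange n).filter _).imp_of_mem fun ha hb hab => ?_
    simp_all [readingRank]
  · rw [List.pairwise_reverse]
    refine ((List.pairwise_lt_finRange n).filter _).imp_of_mem fun ha hb hab => ?_
    simp_all [readingRank]
    omega
  · intro a ha b hb
    simp_all [readingRank]
    omega

theorem pairwise_readingRank_map_finRange {n : ℕ} (χ : Fin n → Bool) (s : Equiv.Perm (Fin n))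
    (hs₁ : ∀ i j : Fin n, i < j → χ (s i) = true → χ (s j) = true → s i < s j)
    (hs₂ : ∀ i j : Fin n, i < j → χ (s i) = false → χ (s j) = false → s j < s i)
    (hs₃ : ∀ i j : Fin n, i < j → χ (s i) = false → χ (s j) = false) :
    ((List.finRange n).map s).Pairwise (readingRank χ · < readingRank χ ·) := by
  refine List.pairwise_map.mpr ((List.pairwise_lt_finRange n).imp fun {i j} hij => ?_)
  cases hi : χ (s i)
  · have hj := hs₃ i j hij hi
    have := hs₂ i j hij hi hj
    simp only [readingRank, hi, hj, Bool.false_eq_true, if_false]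
    omega
  · cases hj : χ (s j)
    · simp only [readingRank, hi, hj, Bool.false_eq_true, if_true, if_false]
      omega
    · simpa [readingRank, hi, hj] using hs₁ i j hij hi hj

theorem map_finRange_eq_readingOrder {n : ℕ} (χ : Fin n → Bool) (s : Equiv.Perm (Fin n))
    (hs₁ : ∀ i j : Fin n, i < j → χ (s i) = true → χ (s j) = true → s i < s j)
    (hs₂ : ∀ i j : Fin n, i < j → χ (s i) = false → χ (s j) = false → s j < s i)
    (hs₃ : ∀ i j : Fin n, i < j → χ (s i) = false → χ (s j) = false) :
    (List.finRange n).map s = readingOrder χ := by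
  have : Std.Irrefl (readingRank χ · < readingRank χ ·) := ⟨fun _ => lt_irrefl _⟩
  refine (pairwise_readingRank_map_finRange χ s hs₁ hs₂ hs₃).eq_of_mem_iff
    (pairwise_readingRank_readingOrder χ) fun k => ?_
  cases h : χ k <;> simp [readingOrder, h, s.surjective k]

theorem readingOrder_succ_of_true {n : ℕ} (χ : Fin (n + 1) → Bool) (h : χ 0 = true) :
    readingOrder χ = 0 :: (readingOrder (Fin.tail χ)).map Fin.succ := by
  simp [readingOrder, List.finRange_succ, h, List.filter_map, Function.comp_def, Fin.tail]

theorem readingOrder_succ_of_false {n : ℕ} (χ : Fin (n + 1) → Bool) (h : χ 0 = false) :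
    readingOrder χ = (readingOrder (Fin.tail χ)).map Fin.succ ++ [0] := by
  simp [readingOrder, List.finRange_succ, h, List.filter_map, Function.comp_def, Fin.tail]

def sideMul {M : Type*} [Mul M] (b : Bool) (x y : M) : M :=
  if b then x * y else y * x

def wordMatrix {R : Type*} [Semiring R] {n d : ℕ} (χ : Fin n → Bool) (i j : Fin n → Fin d) :
    Matrix (Fin d) (Fin d) R :=
  ((readingOrder χ).map fun k => single (i k) (j k) (1 : R)).prod

theorem wordMatrix_cons {R : Type*} [Semiring R] {n d : ℕ} (χ : Fin (n + 1) → Bool)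
    (x y : Fin d) (i j : Fin n → Fin d) :
    (wordMatrix χ (Fin.cons x i) (Fin.cons y j) : Matrix (Fin d) (Fin d) R)
      = sideMul (χ 0) (single x y 1) (wordMatrix (Fin.tail χ) i j) := by
  cases h : χ 0
  · simp [wordMatrix, sideMul, readingOrder_succ_of_false χ h, Function.comp_def]
  · simp [wordMatrix, sideMul, readingOrder_succ_of_true χ h, Function.comp_def]

theorem Lop_map_smul {d : ℕ} (Z : Matrix (Fin d) (Fin d) A) (U : Matrix (Fin d) (Fin d) ℂ)
    (w : A) :
    Lop d Z (U.map (· • w)) = ∑ x, ∑ y, (single x y 1 * U).map (· • (Z x y * w)) := by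
  ext a b
  rw [Matrix.sum_apply, Finset.sum_eq_single a (fun x _ hx => by
    simp [Matrix.sum_apply, single_mul_apply_of_ne _ _ _ _ _ (Ne.symm hx)]) (by simp)]
  simp [Lop, Matrix.sum_apply, mul_apply (M := Z)]

theorem Rop_map_smul {d : ℕ} (Z : Matrix (Fin d) (Fin d) A) (U : Matrix (Fin d) (Fin d) ℂ)
    (w : A) :
    Rop d Z (U.map (· • w)) = ∑ x, ∑ y, (U * single x y 1).map (· • (Z x y * w)) := by
  ext a b
  simp only [Matrix.sum_apply]
  rw [Finset.sum_comm, Finset.sum_eq_single b (fun y _ hy => by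
    simp [mul_single_apply_of_ne _ _ _ _ _ hy.symm]) (by simp)]
  simp [Rop, mul_apply (M := Zᵀ)]

theorem lrOp_map_smul {d : ℕ} (b : Bool) (Z : Matrix (Fin d) (Fin d) A)
    (U : Matrix (Fin d) (Fin d) ℂ) (w : A) :
    (if b then Lop d Z else Rop d Z) (U.map (· • w))
      = ∑ x, ∑ y, (sideMul b (single x y 1) U).map (· • (Z x y * w)) := by
  cases b
  · exact Rop_map_smul Z U w
  · exact Lop_map_smul Z U w

theorem prod_lrOp_apply_one {n d : ℕ} (χ : Fin n → Bool)
    (Zm : Fin n → Matrix (Fin d) (Fin d) A) :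
    ((List.finRange n).map fun k => if χ k then Lop d (Zm k) else Rop d (Zm k)).prod 1
      = ∑ i : Fin n → Fin d, ∑ j : Fin n → Fin d,
          (wordMatrix χ i j : Matrix (Fin d) (Fin d) ℂ).map
            (· • ((List.finRange n).map fun k => Zm k (i k) (j k)).prod) := by
  induction n with
  | zero => simp [wordMatrix, readingOrder]
  | succ n ih =>
    conv_lhs =>
      rw [List.finRange_succ, List.map_cons, List.prod_cons, List.map_map, Module.End.mul_apply]
    refine (congrArg _ (ih (Fin.tail χ) (Fin.tail Zm))).trans ?_
    simp only [map_sum, lrOp_map_smul, Fin.sum_univ_fun_succ, wordMatrix_cons,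
      List.finRange_succ, List.map_cons, List.prod_cons, List.map_map, Function.comp_def,
      Fin.cons_zero, Fin.cons_succ]
    -- reorder `∑ x, ∑ i, ∑ y, ∑ j` into `∑ i, ∑ j, ∑ x, ∑ y`
    conv_rhs =>
      rw [Finset.sum_comm]
      enter [2, i]
      conv => enter [2, x]; rw [Finset.sum_comm]
      rw [Finset.sum_comm]
    rfl

theorem stmt7_general (n d : ℕ) (φ : A →ₗ[ℂ] ℂ)
    (χ : Fin n → Bool) (s : Equiv.Perm (Fin n))
    (hs₁ : ∀ i j : Fin n, i < j → χ (s i) = true → χ (s j) = true → s i < s j)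
    (hs₂ : ∀ i j : Fin n, i < j → χ (s i) = false → χ (s j) = false → s j < s i)
    (hs₃ : ∀ i j : Fin n, i < j → χ (s i) = false → χ (s j) = false)
    (Zm : Fin n → Matrix (Fin d) (Fin d) A) :
    Ed d φ (((List.finRange n).map fun k =>
        if χ k then Lop d (Zm k) else Rop d (Zm k)).prod)
      = ∑ i : Fin n → Fin d, ∑ j : Fin n → Fin d,
          φ (((List.finRange n).map fun k => Zm k (i k) (j k)).prod) •
            ((List.finRange n).map fun k =>
              Matrix.single (i (s k)) (j (s k)) (1 : ℂ)).prod := by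
  have hword (i j : Fin n → Fin d) :
      ((List.finRange n).map fun k => single (i (s k)) (j (s k)) (1 : ℂ)).prod
        = wordMatrix χ i j := by
    rw [wordMatrix, ← map_finRange_eq_readingOrder χ s hs₁ hs₂ hs₃, List.map_map]
    rfl
  ext a b
  simp [Ed, prod_lrOp_apply_one, Matrix.sum_apply, hword, mul_comm]

/-- Let `(A, φ)` be a non-commutative probability space,
`χ : {1,…,n} → {ℓ,r}`, and `[Z_{k;i,j}] ∈ M_d(A)` for `1 ≤ k ≤ n`.  Set `Z_k = L([Z_{k;i,j}])`
if `χ(k) = ℓ` and `Z_k = R([Z_{k;i,j}])` if `χ(k) = r`.  Then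
`E_d(Z₁⋯Z_n) = Σ_{i₁,…,i_n, j₁,…,j_n} φ(Z_{1;i₁,j₁} ⋯ Z_{n;i_n,j_n}) ·
E_{i_{s_χ(1)}, j_{s_χ(1)}} ⋯ E_{i_{s_χ(n)}, j_{s_χ(n)}}`, where the `E_{i,j}` are the scalar
matrix units and `s = s_χ` is characterized by `hs₁, hs₂, hs₃`. -/
theorem stmt7 (n d : ℕ) (φ : A →ₗ[ℂ] ℂ) (hφ : φ 1 = 1)
    (χ : Fin n → Bool) (s : Equiv.Perm (Fin n))
    (hs₁ : ∀ i j : Fin n, i < j → χ (s i) = true → χ (s j) = true → s i < s j)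
    (hs₂ : ∀ i j : Fin n, i < j → χ (s i) = false → χ (s j) = false → s j < s i)
    (hs₃ : ∀ i j : Fin n, i < j → χ (s i) = false → χ (s j) = false)
    (Zm : Fin n → Matrix (Fin d) (Fin d) A) :
    Ed d φ (((List.finRange n).map fun k =>
        if χ k then Lop d (Zm k) else Rop d (Zm k)).prod)
      = ∑ i : Fin n → Fin d, ∑ j : Fin n → Fin d,
          φ (((List.finRange n).map fun k => Zm k (i k) (j k)).prod) •
            ((List.finRange n).map fun k =>
              Matrix.single (i (s k)) (j (s k)) (1 : ℂ)).prod :=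
  stmt7_general n d φ χ s hs₁ hs₂ hs₃ Zm

end
end

section
/- Fix n ≥ 1 and let σ_n be the partition of {1,…,2n} with blocks {1,2}, {3,4}, …, {2n−1,2n}. Let π be a non-crossing partition of {1,…,2n} such that π ∨ σ_n = 1_{2n} (the one-block partition) and such that no block of π contains both an even and an odd number. Then there exists a unique odd number m ∈ {1,…,2n−1} such that 1 and m lie in the same block of π and m+1 and 2n lie in the same block of π. -/
/-!
Let `m` be the largest element of the block of `0` and `M` the largest element of the block
of `m + 1`. Non-crossing forces every block meeting `[0, m]` or `[m + 1, M]` to stay inside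
`[0, M]`, and `M` is odd by the parity hypothesis, so `[0, M]` is a union of blocks of both `π`
and `σ_n`; as `π ∨ σ_n` has one block, `M = 2n - 1`. For uniqueness, two solutions `m' < m`
would give `m' < m' + 1 < m < 2n - 1` with `m' ~ m` and `m' + 1 ~ 2n - 1`, and non-crossing
would put the even `m'` and the odd `m' + 1` into one block.
-/

/-- A partition of `Fin m` (encoded as a `Setoid`) is non-crossing if there are no
`a < b < c < d` with `a, c` in one block and `b, d` in a different block. -/
def NonCrossingPart {m : ℕ} (π : Setoid (Fin m)) : Prop :=
  ∀ a b c d : Fin m, a < b → b < c → c < d → π.r a c → π.r b d → π.r a b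

theorem Setoid.exists_isGreatest_rel {k : ℕ} (π : Setoid (Fin k)) (a : Fin k) :
    ∃ c, IsGreatest {j | π.r a j} c :=
  let ⟨c, hc, hmax⟩ := Set.exists_max_image {j | π.r a j} id (Set.toFinite _) ⟨a, π.refl' a⟩
  ⟨c, hc, hmax⟩

theorem Setoid.iff_of_sup_eq_top {α : Type*} {r s : Setoid α} (h : r ⊔ s = ⊤) {p : α → Prop}
    (hr : ∀ x y, r x y → (p x ↔ p y)) (hs : ∀ x y, s x y → (p x ↔ p y)) (x y : α) :
    p x ↔ p y := by
  have hle : r ⊔ s ≤ Setoid.ker p :=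
    sup_le (fun x y hxy => propext (hr x y hxy)) (fun x y hxy => propext (hs x y hxy))
  rw [h] at hle
  exact (Setoid.ker_def.mp (hle trivial)).to_iff

namespace NonCrossingPart

variable {k : ℕ} {π : Setoid (Fin k)}

theorem rel_of_le_of_le (hnc : NonCrossingPart π) {a c i j : Fin k} (hac : π.r a c)
    (hai : a ≤ i) (hic : i ≤ c) (hij : π.r i j) (hcj : c < j) : π.r a j := by
  rcases hai.eq_or_lt with rfl | hai
  · exact hij
  rcases hic.eq_or_lt with rfl | hic
  · exact π.trans' hac hij
  exact π.trans' (hnc a i c j hai hic hcj hac hij) hij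

theorem le_of_isGreatest (hnc : NonCrossingPart π) {a c i j : Fin k}
    (hc : IsGreatest {j | π.r a j} c) (hai : a ≤ i) (hic : i ≤ c) (hij : π.r i j) : j ≤ c :=
  not_lt.mp fun hcj => (hc.2 (hnc.rel_of_le_of_le hc.1 hai hic hij hcj)).not_gt hcj

theorem false_of_rel_of_rel_succ (hnc : NonCrossingPart π)
    (hpar : ∀ i j : Fin k, π.r i j → i.val % 2 = j.val % 2) {a b c d : Fin k}
    (hab : a < b) (hbd : b < d) (hc : c.val = a.val + 1) (hab_rel : π.r a b) (hcd : π.r c d) :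
    False := by
  have hparab := hpar a b hab_rel
  have hcb : c < b := by
    rw [Fin.lt_def] at hab ⊢
    omega
  have hac : a < c := by
    rw [Fin.lt_def]
    omega
  have := hpar a c (hnc a c b d hac hcb hbd hab_rel hcd)
  omega

end NonCrossingPart

section PairPartition

variable {n : ℕ} {π : Setoid (Fin (2 * n))}

theorem val_eq_of_forall_rel_le
    (hjoin : π ⊔ Setoid.ker (fun i : Fin (2 * n) => i.val / 2) = ⊤) {M : Fin (2 * n)}
    (hM : M.val % 2 = 1) (hclosed : ∀ i j, π.r i j → i ≤ M → j ≤ M) :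
    M.val = 2 * n - 1 := by
  have hiff := Setoid.iff_of_sup_eq_top hjoin (p := (· ≤ M))
    (fun x y hxy => ⟨hclosed x y hxy, hclosed y x (π.symm' hxy)⟩)
    (fun x y hxy => by
      have : x.val / 2 = y.val / 2 := hxy
      simp only [Fin.le_iff_val_le_val]
      omega)
    ⟨0, by omega⟩ ⟨2 * n - 1, by omega⟩
  have hlast : 2 * n - 1 ≤ M.val := hiff.mp (Nat.zero_le _)
  omega

theorem exists_rel_zero_rel_last (hnc : NonCrossingPart π)
    (hjoin : π ⊔ Setoid.ker (fun i : Fin (2 * n) => i.val / 2) = ⊤)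
    (hpar : ∀ i j : Fin (2 * n), π.r i j → i.val % 2 = j.val % 2) (hn : 0 < n) :
    ∃ m : ℕ, ∃ (h₁ : m < 2 * n) (h₂ : m + 1 < 2 * n),
      m % 2 = 0 ∧ π.r ⟨0, Nat.mul_pos two_pos hn⟩ ⟨m, h₁⟩ ∧
        π.r ⟨m + 1, h₂⟩ ⟨2 * n - 1, Nat.sub_one_lt (Nat.mul_pos two_pos hn).ne'⟩ := by
  set zero : Fin (2 * n) := ⟨0, by omega⟩
  obtain ⟨m, hm⟩ := π.exists_isGreatest_rel zero
  have hm_even : m.val % 2 = 0 := (hpar _ _ hm.1).symm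
  have hm_succ : m.val + 1 < 2 * n := by omega
  set m' : Fin (2 * n) := ⟨m.val + 1, hm_succ⟩
  obtain ⟨M, hM⟩ := π.exists_isGreatest_rel m'
  have hmM : m ≤ M := by
    have : m' ≤ M := hM.2 (π.refl' m')
    simp only [Fin.le_iff_val_le_val, m'] at this ⊢
    omega
  have hclosed : ∀ i j, π.r i j → i ≤ M → j ≤ M := by
    intro i j hij hiM
    by_cases him : i ≤ m
    · exact (hnc.le_of_isGreatest hm (Nat.zero_le i.val) him hij).trans hmM
    · exact hnc.le_of_isGreatest hM (not_le.mp him) hiM hij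
  have hM_last : M.val = 2 * n - 1 := val_eq_of_forall_rel_le hjoin (by
    have := hpar _ _ hM.1
    simp only [m'] at this
    omega) hclosed
  refine ⟨m.val, m.isLt, hm_succ, hm_even, hm.1, ?_⟩
  have hM_eq : M = ⟨2 * n - 1, by omega⟩ := Fin.ext hM_last
  exact hM_eq ▸ hM.1

end PairPartition

/-- Fix `n ≥ 1` and let `σ_n` be the partition of `{1,…,2n}` with blocks
`{1,2}, {3,4}, …, {2n−1,2n}` (here encoded `0`-indexed as `Setoid.ker (·.val / 2)` on
`Fin (2n)`).  Let `π` be a non-crossing partition of `{1,…,2n}` such that `π ∨ σ_n = 1_{2n}`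
(the one-block partition `⊤`) and such that no block of `π` contains both an even and an odd
number.  Then there exists a unique odd number `m ∈ {1,…,2n−1}` (encoded `0`-indexed as an
even `m < 2n`) such that `1` and `m` lie in the same block of `π` and `m+1` and `2n` lie in
the same block of `π`. -/
theorem stmt13 (n : ℕ) (hn : 0 < n) (π : Setoid (Fin (2 * n)))
    (hnc : NonCrossingPart π)
    (hjoin : π ⊔ Setoid.ker (fun i : Fin (2 * n) => i.val / 2) = ⊤)
    (hpar : ∀ i j : Fin (2 * n), π.r i j → i.val % 2 = j.val % 2) :
    ∃! m : ℕ, ∃ (h₁ : m < 2 * n) (h₂ : m + 1 < 2 * n),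
      m % 2 = 0 ∧ π.r ⟨0, by omega⟩ ⟨m, h₁⟩ ∧ π.r ⟨m + 1, h₂⟩ ⟨2 * n - 1, by omega⟩ := by
  obtain ⟨m, hm⟩ := exists_rel_zero_rel_last hnc hjoin hpar hn
  refine ⟨m, hm, fun m' hm' => ?_⟩
  wlog hle : m' ≤ m generalizing m m'
  · exact (this m' hm' m hm (by omega)).symm
  obtain ⟨h₁, -, heven, hzero, -⟩ := hm
  obtain ⟨h₂, h₂', -, hzero', hlast'⟩ := hm'
  refine hle.eq_of_not_lt fun hlt => ?_
  exact hnc.false_of_rel_of_rel_succ hpar (c := ⟨m' + 1, h₂'⟩) (Fin.mk_lt_mk.mpr hlt)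
    (Fin.mk_lt_mk.mpr (by omega)) rfl (π.trans' (π.symm' hzero') hzero) hlast'
end

section
/- For n ≥ 1, let BNC'(n) be the set of non-crossing partitions π of {1,…,2n} such that {1} is a singleton block of π, no block of π contains both an even and an odd number, and π ∨ σ_n = 1_{2n} where σ_n has blocks {1,2},{3,4},…,{2n−1,2n}. Then the map sending a non-crossing partition τ of the odd numbers {1,3,…,2n−1} with {1} a singleton block to τ ∪ K(τ) (where K(τ) is the Kreweras complement of τ placed on the even numbers {2,4,…,2n}) is a bijection onto BNC'(n). -/
/-- The inclusion of the odd numbers `{1, 3, …, 2n−1}` into `{1, …, 2n}`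
(`0`-indexed: `k ↦ 2k`). -/
def oddPos (n : ℕ) (k : Fin n) : Fin (2 * n) :=
  ⟨2 * k.val, by have := k.isLt; omega⟩

/-- `{1}` is a singleton block of the partition `τ` (of a `Fin`-type, `0`-indexed). -/
def SingletonOne {m : ℕ} (τ : Setoid (Fin m)) : Prop :=
  ∀ x y : Fin m, x.val = 0 → τ.r x y → y = x

/-- No block contains both an even and an odd number (`1`-indexed), i.e. the partition of
`{1,…,2n}` splits as a partition of the odds together with one of the evens. -/
def NoParityMix (n : ℕ) (π : Setoid (Fin (2 * n))) : Prop :=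
  ∀ i j : Fin (2 * n), π.r i j → i.val % 2 = j.val % 2

/-- `π` is a partition of `{1,…,2n}` which mixes no parities, is non-crossing, and whose
restriction to the odd numbers is `τ`. -/
def CombinedWith (n : ℕ) (τ : Setoid (Fin n)) (π : Setoid (Fin (2 * n))) : Prop :=
  NonCrossingPart π ∧ NoParityMix n π ∧ Setoid.comap (oddPos n) π = τ

/-- `π = τ ∪ K(τ)`: among all non-crossing parity-respecting partitions of `{1,…,2n}`
restricting to `τ` on the odd numbers, `π` is the largest one — this is precisely the
defining property of the Kreweras complement `K(τ)` placed on the even numbers. -/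
def IsKrewerasExtension (n : ℕ) (τ : Setoid (Fin n)) (π : Setoid (Fin (2 * n))) : Prop :=
  CombinedWith n τ π ∧ ∀ π' : Setoid (Fin (2 * n)), CombinedWith n τ π' → π' ≤ π

/-- Membership in `BNC'(n)`: `π` is a non-crossing partition of `{1,…,2n}` with `{1}` a
singleton block, no block containing both an even and an odd number, and
`π ∨ σ_n = 1_{2n}` where `σ_n` has blocks `{1,2},{3,4},…,{2n−1,2n}`. -/
def MemBNC' (n : ℕ) (π : Setoid (Fin (2 * n))) : Prop :=
  NonCrossingPart π ∧ SingletonOne π ∧ NoParityMix n π ∧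
    π ⊔ Setoid.ker (fun i : Fin (2 * n) => i.val / 2) = ⊤

/-!
Position `2k` (0-indexed) carries the `k`-th point of `τ`, position `2k + 1` the `k`-th point of
`K(τ)`. Two points `i, j` of `K(τ)` can be joined exactly when the points of `τ` between them
form a union of blocks of `τ`; this describes `τ ∪ K(τ)` explicitly, and every non-crossing
parity-respecting extension of `τ` lies below it, since otherwise one of its blocks on the even
points would cross a block of `τ`.

Conversely, let `π ∈ BNC'(n)` have odd part `τ`, and let `i < j` be related by `K(τ)`; the
`τ`-block of `j` then has maximum `j` and some minimum `m > i`. If the `π`-block of the even point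
`j` stayed right of `m`, the positions from the odd point `m` to the last even point of that block
would be a union of blocks of both `π` and `σ_n`, contradicting `π ∨ σ_n = 1`. So that block
contains an even point `l < m`, and `i ~ l` in `K(τ)` with `max i l < j`: induct on `j`.

That `(τ ∪ K(τ)) ∨ σ_n = 1` follows by walking from a `τ`-block with minimum `m > 0` and
maximum `M` through the even points `M` and `m - 1` to the odd point `m - 1`.
-/

theorem NonCrossingPart.rel_of_separated {m : ℕ} {π : Setoid (Fin m)} (h : NonCrossingPart π)
    {p q s t : Fin m} (hps : p < s) (hsq : s < q) (hpq : π p q) (hst : π s t)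
    (ht : t < p ∨ q < t) : π p s := by
  rcases ht with ht | ht
  · exact π.trans (π.symm (h t p s q ht hps hsq (π.symm hst) hpq)) (π.symm hst)
  · exact h p s q t hps hsq ht hpq hst

theorem NonCrossingPart.comap {m k : ℕ} {π : Setoid (Fin k)} (h : NonCrossingPart π)
    {f : Fin m → Fin k} (hf : StrictMono f) : NonCrossingPart (π.comap f) :=
  fun _ _ _ _ hab hbc hcd hac hbd => h _ _ _ _ (hf hab) (hf hbc) (hf hcd) hac hbd

/-- Otherwise the block of `a` would cross the block of `m`. -/
theorem NonCrossingPart.le_and_le_of_rel {k : ℕ} {τ : Setoid (Fin k)} (h : NonCrossingPart τ)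
    {m M : Fin k} (hmM : τ m M) (hblock : ∀ x, τ m x → m ≤ x ∧ x ≤ M)
    {a c : Fin k} (hac : τ a c) (hma : m ≤ a) (haM : a ≤ M) : m ≤ c ∧ c ≤ M := by
  by_cases hτma : τ m a
  · exact hblock c (τ.trans hτma hac)
  by_contra hc
  have hma' : m < a := lt_of_le_of_ne hma fun h => hτma (h ▸ τ.refl m)
  have haM' : a < M := lt_of_le_of_ne haM fun h => hτma (h ▸ hmM)
  exact hτma (h.rel_of_separated hma' haM' hmM hac (by omega))

theorem Setoid.exists_rel_forall_le {α : Type*} [LinearOrder α] [Finite α] (r : Setoid α)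
    (x : α) : ∃ m, r x m ∧ ∀ y, r x y → m ≤ y := by
  obtain ⟨m, hm, hmin⟩ :=
    Set.exists_min_image {y | r x y} id (Set.toFinite _) ⟨x, r.refl x⟩
  exact ⟨m, hm, hmin⟩

theorem Setoid.exists_rel_forall_ge {α : Type*} [LinearOrder α] [Finite α] (r : Setoid α)
    (x : α) : ∃ M, r x M ∧ ∀ y, r x y → y ≤ M := by
  obtain ⟨M, hM, hmax⟩ :=
    Set.exists_max_image {y | r x y} id (Set.toFinite _) ⟨x, r.refl x⟩
  exact ⟨M, hM, hmax⟩

theorem Setoid.mem_iff_mem_of_sup_eq_top {α : Type*} {r s : Setoid α} (h : r ⊔ s = ⊤)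
    {S : Set α} (hr : ∀ x y, r x y → x ∈ S → y ∈ S) (hs : ∀ x y, s x y → x ∈ S → y ∈ S)
    (x y : α) : x ∈ S ↔ y ∈ S := by
  have hle : r ⊔ s ≤ Setoid.ker (· ∈ S) :=
    sup_le (fun _ _ hxy => propext ⟨hr _ _ hxy, hr _ _ (r.symm hxy)⟩)
      (fun _ _ hxy => propext ⟨hs _ _ hxy, hs _ _ (s.symm hxy)⟩)
  rw [h] at hle
  exact Iff.of_eq (hle trivial)

section Positions

variable {n : ℕ}

/-- The inclusion of the even numbers `{2, 4, …, 2n}` into `{1, …, 2n}` (`0`-indexed). -/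
def evenPos (k : Fin n) : Fin (2 * n) :=
  ⟨2 * k.val + 1, by omega⟩

@[simp] theorem oddPos_val (k : Fin n) : (oddPos n k).val = 2 * k.val := rfl

@[simp] theorem evenPos_val (k : Fin n) : (evenPos k).val = 2 * k.val + 1 := rfl

theorem oddPos_strictMono : StrictMono (oddPos n) := fun a b h => by
  simp only [Fin.lt_def, oddPos_val]; omega

theorem oddPos_injective : Function.Injective (oddPos n) := oddPos_strictMono.injective

theorem evenPos_injective : Function.Injective (evenPos (n := n)) := fun a b h => by
  have := congrArg Fin.val h; simp only [evenPos_val] at this; omega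

theorem oddPos_ne_evenPos (a b : Fin n) : oddPos n a ≠ evenPos b := fun h => by
  have := congrArg Fin.val h; simp only [oddPos_val, evenPos_val] at this; omega

theorem oddPos_or_evenPos (x : Fin (2 * n)) : (∃ a, oddPos n a = x) ∨ ∃ a, evenPos a = x := by
  rcases Nat.even_or_odd' x.val with ⟨k, hk | hk⟩
  · exact .inl ⟨⟨k, by omega⟩, Fin.ext (by simp [hk])⟩
  · exact .inr ⟨⟨k, by omega⟩, Fin.ext (by simp [hk])⟩

theorem oddPos_lt_evenPos {a b : Fin n} : oddPos n a < evenPos b ↔ a ≤ b := by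
  simp only [Fin.lt_def, oddPos_val, evenPos_val]; omega

theorem evenPos_lt_oddPos {a b : Fin n} : evenPos a < oddPos n b ↔ a < b := by
  simp only [Fin.lt_def, oddPos_val, evenPos_val]; omega

theorem evenPos_lt_evenPos {a b : Fin n} : evenPos a < evenPos b ↔ a < b := by
  simp only [Fin.lt_def, evenPos_val]; omega

theorem pairing_oddPos_evenPos (a : Fin n) :
    Setoid.ker (fun i : Fin (2 * n) => i.val / 2) (oddPos n a) (evenPos a) := by
  simp only [Setoid.ker_def, oddPos_val, evenPos_val]; omega

theorem NoParityMix.not_rel_oddPos_evenPos {π : Setoid (Fin (2 * n))} (h : NoParityMix n π)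
    (a b : Fin n) : ¬ π (oddPos n a) (evenPos b) := fun hab => by
  have := h _ _ hab; simp only [oddPos_val, evenPos_val] at this; omega

end Positions

section KrewerasComplement

variable {n : ℕ}

/-- The Kreweras complement: `i ~ j` iff the `τ`-points strictly after `min i j` and up to
`max i j` form a union of blocks of `τ`. -/
def kreweras (τ : Setoid (Fin n)) : Setoid (Fin n) where
  r i j := ∀ a c, τ a c → ((i < a ↔ j < a) ↔ (i < c ↔ j < c))
  iseqv :=
    { refl := fun _ _ _ _ => iff_of_true Iff.rfl Iff.rfl
      symm := fun h a c hac => by have := h a c hac; tauto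
      trans := fun h h' a c hac => by have := h a c hac; have := h' a c hac; tauto }

theorem kreweras_apply {τ : Setoid (Fin n)} {i j : Fin n} :
    kreweras τ i j ↔ ∀ a c, τ a c → ((i < a ↔ j < a) ↔ (i < c ↔ j < c)) := Iff.rfl

theorem kreweras_of_block {τ : Setoid (Fin n)} (hτ : NonCrossingPart τ) {m M i : Fin n}
    (hmM : τ m M) (hblock : ∀ x, τ m x → m ≤ x ∧ x ≤ M) (hi : i.val + 1 = m.val) :
    kreweras τ i M := kreweras_apply.2 fun a c hac => by
  have := fun h h' => hτ.le_and_le_of_rel hmM hblock hac h h'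
  have := fun h h' => hτ.le_and_le_of_rel hmM hblock (τ.symm hac) h h'
  have := hblock m (τ.refl m)
  omega

/-- `τ ∪ K(τ)`, with `τ` on the odd and `K(τ)` on the even numbers. -/
def krewerasUnion (τ : Setoid (Fin n)) : Setoid (Fin (2 * n)) where
  r x y := (∃ a c, oddPos n a = x ∧ oddPos n c = y ∧ τ a c) ∨
    ∃ a c, evenPos a = x ∧ evenPos c = y ∧ kreweras τ a c
  iseqv :=
    { refl := fun x => by
        rcases oddPos_or_evenPos x with ⟨a, rfl⟩ | ⟨a, rfl⟩
        · exact .inl ⟨a, a, rfl, rfl, τ.refl a⟩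
        · exact .inr ⟨a, a, rfl, rfl, (kreweras τ).refl a⟩
      symm := by
        rintro _ _ (⟨a, c, rfl, rfl, h⟩ | ⟨a, c, rfl, rfl, h⟩)
        · exact .inl ⟨c, a, rfl, rfl, τ.symm h⟩
        · exact .inr ⟨c, a, rfl, rfl, (kreweras τ).symm h⟩
      trans := by
        rintro _ _ _ (⟨a, b, rfl, rfl, h⟩ | ⟨a, b, rfl, rfl, h⟩)
          (⟨b', c, hb, rfl, h'⟩ | ⟨b', c, hb, rfl, h'⟩)
        · cases oddPos_injective hb
          exact .inl ⟨a, c, rfl, rfl, τ.trans h h'⟩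
        · exact absurd hb.symm (oddPos_ne_evenPos _ _)
        · exact absurd hb (oddPos_ne_evenPos _ _)
        · cases evenPos_injective hb
          exact .inr ⟨a, c, rfl, rfl, (kreweras τ).trans h h'⟩ }

variable {τ : Setoid (Fin n)}

theorem krewerasUnion_oddPos {a c : Fin n} :
    krewerasUnion τ (oddPos n a) (oddPos n c) ↔ τ a c := by
  constructor
  · rintro (⟨a', c', ha, hc, h⟩ | ⟨_, _, ha, _, _⟩)
    · rwa [← oddPos_injective ha, ← oddPos_injective hc]
    · exact absurd ha.symm (oddPos_ne_evenPos _ _)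
  · exact fun h => .inl ⟨a, c, rfl, rfl, h⟩

theorem krewerasUnion_evenPos {a c : Fin n} :
    krewerasUnion τ (evenPos a) (evenPos c) ↔ kreweras τ a c := by
  constructor
  · rintro (⟨_, _, ha, _, _⟩ | ⟨a', c', ha, hc, h⟩)
    · exact absurd ha (oddPos_ne_evenPos _ _)
    · rwa [← evenPos_injective ha, ← evenPos_injective hc]
  · exact fun h => .inr ⟨a, c, rfl, rfl, h⟩

theorem noParityMix_krewerasUnion : NoParityMix n (krewerasUnion τ) := by
  rintro _ _ (⟨a, c, rfl, rfl, -⟩ | ⟨a, c, rfl, rfl, -⟩) <;>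
    simp only [oddPos_val, evenPos_val] <;> omega

theorem comap_oddPos_krewerasUnion : (krewerasUnion τ).comap (oddPos n) = τ :=
  Setoid.ext fun _ _ => krewerasUnion_oddPos

theorem singletonOne_krewerasUnion (hτ : SingletonOne τ) : SingletonOne (krewerasUnion τ) := by
  rintro _ _ hx (⟨a, c, rfl, rfl, h⟩ | ⟨a, c, rfl, rfl, -⟩)
  · rw [hτ a c (by simpa using hx) h]
  · simp at hx

theorem nonCrossingPart_krewerasUnion (hτ : NonCrossingPart τ) :
    NonCrossingPart (krewerasUnion τ) := by
  intro _ _ _ _ hab hbc hcd hac hbd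
  rcases hac with ⟨a, c, rfl, rfl, hac⟩ | ⟨a, c, rfl, rfl, hac⟩ <;>
    rcases hbd with ⟨b, d, rfl, rfl, hbd⟩ | ⟨b, d, rfl, rfl, hbd⟩
  · simp only [oddPos_strictMono.lt_iff_lt] at hab hbc hcd
    exact krewerasUnion_oddPos.2 (hτ a b c d hab hbc hcd hac hbd)
  · rw [oddPos_lt_evenPos] at hab
    rw [evenPos_lt_oddPos] at hbc
    rw [oddPos_lt_evenPos] at hcd
    have := kreweras_apply.1 hbd a c hac
    omega
  · rw [evenPos_lt_oddPos] at hab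
    rw [oddPos_lt_evenPos] at hbc
    rw [evenPos_lt_oddPos] at hcd
    have := kreweras_apply.1 hac b d hbd
    omega
  · rw [evenPos_lt_evenPos] at hab hbc hcd
    refine krewerasUnion_evenPos.2 (kreweras_apply.2 fun x y hxy => ?_)
    have := kreweras_apply.1 hac x y hxy
    have := kreweras_apply.1 hbd x y hxy
    omega

theorem krewerasUnion_sup_pairing_eq_top (hτ : NonCrossingPart τ) :
    krewerasUnion τ ⊔ Setoid.ker (fun i : Fin (2 * n) => i.val / 2) = ⊤ := by
  set J := krewerasUnion τ ⊔ Setoid.ker (fun i : Fin (2 * n) => i.val / 2)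
  have hU {x y} (h : krewerasUnion τ x y) : J x y := le_sup_left (α := Setoid _) h
  have hσ (a : Fin n) : J (oddPos n a) (evenPos a) :=
    le_sup_right (α := Setoid _) (pairing_oddPos_evenPos a)
  have hroot (t r : Fin n) (hr : r.val = 0) : J (oddPos n t) (oddPos n r) := by
    induction t using WellFoundedLT.induction with | ind t ih => ?_
    obtain ⟨m, htm, hmin⟩ := τ.exists_rel_forall_le t
    obtain ⟨M, htM, hmax⟩ := τ.exists_rel_forall_ge t
    have hblock : ∀ x, τ m x → m ≤ x ∧ x ≤ M := fun x hx =>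
      ⟨hmin x (τ.trans htm hx), hmax x (τ.trans htm hx)⟩
    have hmt : m ≤ t := hmin t (τ.refl t)
    by_cases hm : m.val = 0
    · have hmr : m = r := Fin.ext (by omega)
      exact hU (krewerasUnion_oddPos.2 (hmr ▸ htm))
    let i : Fin n := ⟨m.val - 1, by omega⟩
    have hiM : kreweras τ i M := kreweras_of_block hτ (τ.trans (τ.symm htm) htM) hblock
      (by simp only [i]; omega)
    have hMi : J (evenPos M) (evenPos i) := hU (krewerasUnion_evenPos.2 ((kreweras τ).symm hiM))
    exact J.trans (hU (krewerasUnion_oddPos.2 htM)) <| J.trans (hσ M) <| J.trans hMi <|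
      J.trans (J.symm (hσ i)) (ih i (by simp only [i, Fin.lt_def]; omega))
  have hodd (x : Fin (2 * n)) : ∃ a, J x (oddPos n a) := by
    rcases oddPos_or_evenPos x with ⟨a, rfl⟩ | ⟨a, rfl⟩
    exacts [⟨a, J.refl _⟩, ⟨a, J.symm (hσ a)⟩]
  refine eq_top_iff.2 fun x y _ => ?_
  obtain ⟨a, hxa⟩ := hodd x
  obtain ⟨b, hyb⟩ := hodd y
  let r : Fin n := ⟨0, a.pos⟩
  exact J.trans hxa (J.trans (hroot a r rfl) (J.symm (J.trans hyb (hroot b r rfl))))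

end KrewerasComplement

section Extensions

variable {n : ℕ} {π : Setoid (Fin (2 * n))}

theorem comap_evenPos_le_kreweras (hNC : NonCrossingPart π) (hmix : NoParityMix n π) :
    π.comap evenPos ≤ kreweras (π.comap (oddPos n)) := by
  have inside {u v a c : Fin n} (huv : π (evenPos u) (evenPos v))
      (hac : π (oddPos n a) (oddPos n c)) (hua : u < a) (hav : a ≤ v) : u < c ∧ c ≤ v := by
    by_contra hc
    refine hmix.not_rel_oddPos_evenPos a u (π.symm (hNC.rel_of_separated
      (evenPos_lt_oddPos.2 hua) (oddPos_lt_evenPos.2 hav) huv hac ?_))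
    simp only [Fin.lt_def, oddPos_val, evenPos_val]
    omega
  intro u v huv
  refine kreweras_apply.2 fun a c hac => ?_
  have := @inside u v a c huv hac
  have := @inside u v c a huv (π.symm hac)
  have := @inside v u a c (π.symm huv) hac
  have := @inside v u c a (π.symm huv) (π.symm hac)
  omega

theorem le_krewerasUnion {τ : Setoid (Fin n)} (h : CombinedWith n τ π) :
    π ≤ krewerasUnion τ := by
  obtain ⟨hNC, hmix, rfl⟩ := h
  intro x y hxy
  rcases oddPos_or_evenPos x with ⟨a, rfl⟩ | ⟨a, rfl⟩ <;>
    rcases oddPos_or_evenPos y with ⟨c, rfl⟩ | ⟨c, rfl⟩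
  · exact krewerasUnion_oddPos.2 hxy
  · exact absurd hxy (hmix.not_rel_oddPos_evenPos a c)
  · exact absurd (π.symm hxy) (hmix.not_rel_oddPos_evenPos c a)
  · exact krewerasUnion_evenPos.2 (comap_evenPos_le_kreweras hNC hmix hxy)

/-- Any other block meeting this range would cross the block of the odd point `m` or that of
the even point `j`. -/
theorem mem_Icc_of_rel_of_blocks (hNC : NonCrossingPart π) (hmix : NoParityMix n π)
    {m j L : Fin n} (hmj : π (oddPos n m) (oddPos n j))
    (hblock : ∀ x, π (oddPos n m) (oddPos n x) → m ≤ x ∧ x ≤ j)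
    (hjL : π (evenPos j) (evenPos L)) (hC : ∀ c, π (evenPos j) (evenPos c) → m ≤ c ∧ c ≤ L)
    {x y : Fin (2 * n)} (hxy : π x y) (hx : x ∈ Set.Icc (oddPos n m) (evenPos L)) :
    y ∈ Set.Icc (oddPos n m) (evenPos L) := by
  have hmj' : m ≤ j := (hblock m (π.refl _)).2
  have hjL' : j ≤ L := (hC j (π.refl _)).2
  by_contra hy
  rcases oddPos_or_evenPos x with ⟨a, rfl⟩ | ⟨a, rfl⟩ <;>
    rcases oddPos_or_evenPos y with ⟨c, rfl⟩ | ⟨c, rfl⟩ <;>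
    simp only [Set.mem_Icc, Fin.le_def, oddPos_val, evenPos_val] at hx hy
  · rcases le_or_gt a j with haj | hja
    · have := (hNC.comap oddPos_strictMono).le_and_le_of_rel hmj hblock hxy (by omega) haj
      omega
    refine hmix.not_rel_oddPos_evenPos a j (π.symm (hNC.rel_of_separated
      (evenPos_lt_oddPos.2 hja) (oddPos_lt_evenPos.2 (by omega)) hjL hxy ?_))
    simp only [Fin.lt_def, oddPos_val, evenPos_val]
    omega
  · exact hmix.not_rel_oddPos_evenPos a c hxy
  · exact hmix.not_rel_oddPos_evenPos c a (π.symm hxy)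
  · by_cases haC : π (evenPos j) (evenPos a)
    · have := hC c (π.trans haC hxy)
      omega
    rcases lt_or_ge a j with haj | hja
    · refine hmix.not_rel_oddPos_evenPos m a (hNC.rel_of_separated
        (oddPos_lt_evenPos.2 (by omega)) (evenPos_lt_oddPos.2 haj) hmj hxy ?_)
      simp only [Fin.lt_def, oddPos_val, evenPos_val]
      omega
    have hja' : j < a := lt_of_le_of_ne hja fun h => haC (h ▸ π.refl _)
    have haL : a < L := lt_of_le_of_ne (by omega) fun h => haC (h ▸ hjL)
    refine haC (hNC.rel_of_separated (evenPos_lt_evenPos.2 hja') (evenPos_lt_evenPos.2 haL)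
      hjL hxy ?_)
    simp only [Fin.lt_def, evenPos_val]
    omega

theorem exists_lt_evenPos_rel (hNC : NonCrossingPart π) (hmix : NoParityMix n π)
    (hjoin : π ⊔ Setoid.ker (fun i : Fin (2 * n) => i.val / 2) = ⊤) {m j : Fin n}
    (hm : 0 < m.val) (hmj : π (oddPos n m) (oddPos n j))
    (hblock : ∀ x, π (oddPos n m) (oddPos n x) → m ≤ x ∧ x ≤ j) :
    ∃ l < m, π (evenPos l) (evenPos j) := by
  by_contra! hright
  obtain ⟨L, hjL, hLmax⟩ := (π.comap evenPos).exists_rel_forall_ge j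
  have hC (c : Fin n) (hc : π (evenPos j) (evenPos c)) : m ≤ c ∧ c ≤ L :=
    ⟨not_lt.1 fun h => hright c h (π.symm hc), hLmax c hc⟩
  have hσ (x y : Fin (2 * n)) (hxy : Setoid.ker (fun i : Fin (2 * n) => i.val / 2) x y)
      (hx : x ∈ Set.Icc (oddPos n m) (evenPos L)) : y ∈ Set.Icc (oddPos n m) (evenPos L) := by
    simp only [Setoid.ker_def, Set.mem_Icc, Fin.le_def, oddPos_val, evenPos_val] at hxy hx ⊢
    omega
  have hsat := Setoid.mem_iff_mem_of_sup_eq_top hjoin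
    (fun _ _ hxy => mem_Icc_of_rel_of_blocks hNC hmix hmj hblock hjL hC hxy) hσ
    (oddPos n m) (evenPos ⟨m.val - 1, by omega⟩)
  have hmj' : m ≤ j := (hblock m (π.refl _)).2
  have hjL' : j ≤ L := (hC j (π.refl _)).2
  simp only [Set.mem_Icc, Fin.le_def, oddPos_val, evenPos_val] at hsat
  omega

theorem kreweras_le_comap_evenPos (hNC : NonCrossingPart π) (hmix : NoParityMix n π)
    (hjoin : π ⊔ Setoid.ker (fun i : Fin (2 * n) => i.val / 2) = ⊤) :
    kreweras (π.comap (oddPos n)) ≤ π.comap evenPos := by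
  set τ := π.comap (oddPos n)
  suffices key : ∀ j i : Fin n, i ≤ j → kreweras τ i j → π (evenPos i) (evenPos j) by
    intro i j hij
    rcases le_total i j with h | h
    · exact key j i h hij
    · exact π.symm (key i j h ((kreweras τ).symm hij))
  intro j
  induction j using WellFoundedLT.induction with | ind j ih => ?_
  intro i hij hK
  rcases hij.eq_or_lt with rfl | hij
  · exact π.refl _
  obtain ⟨m, hjm, hmin⟩ := τ.exists_rel_forall_le j
  have hinside (x : Fin n) (hx : τ j x) : i < x ∧ x ≤ j := by
    have := kreweras_apply.1 hK j x hx
    omega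
  have hmj : m ≤ j := hmin j (τ.refl j)
  obtain ⟨l, hlm, hlj⟩ := exists_lt_evenPos_rel hNC hmix hjoin (m := m) (j := j)
    (by have := hinside m hjm; omega) (τ.symm hjm)
    fun x hx => ⟨hmin x (τ.trans hjm hx), (hinside x (τ.trans hjm hx)).2⟩
  have hil : kreweras τ i l :=
    (kreweras τ).trans hK ((kreweras τ).symm (comap_evenPos_le_kreweras hNC hmix hlj))
  rcases le_total i l with h | h
  · exact π.trans (ih l (hlm.trans_le hmj) i h hil) hlj
  · exact π.trans (π.symm (ih i hij l h ((kreweras τ).symm hil))) hlj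

theorem krewerasUnion_le (hNC : NonCrossingPart π) (hmix : NoParityMix n π)
    (hjoin : π ⊔ Setoid.ker (fun i : Fin (2 * n) => i.val / 2) = ⊤) :
    krewerasUnion (π.comap (oddPos n)) ≤ π := by
  rintro _ _ (⟨a, c, rfl, rfl, h⟩ | ⟨a, c, rfl, rfl, h⟩)
  exacts [h, kreweras_le_comap_evenPos hNC hmix hjoin h]

theorem IsKrewerasExtension.unique {τ : Setoid (Fin n)} {π' : Setoid (Fin (2 * n))}
    (h : IsKrewerasExtension n τ π) (h' : IsKrewerasExtension n τ π') : π = π' :=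
  le_antisymm (h'.2 π h.1) (h.2 π' h'.1)

theorem isKrewerasExtension_krewerasUnion {τ : Setoid (Fin n)} (hτ : NonCrossingPart τ) :
    IsKrewerasExtension n τ (krewerasUnion τ) :=
  ⟨⟨nonCrossingPart_krewerasUnion hτ, noParityMix_krewerasUnion, comap_oddPos_krewerasUnion⟩,
    fun _ h => le_krewerasUnion h⟩

theorem isKrewerasExtension_of_memBNC' (h : MemBNC' n π) :
    IsKrewerasExtension n (π.comap (oddPos n)) π := by
  obtain ⟨hNC, -, hmix, hjoin⟩ := h
  exact ⟨⟨hNC, hmix, rfl⟩,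
    fun _ h' => (le_krewerasUnion h').trans (krewerasUnion_le hNC hmix hjoin)⟩

theorem SingletonOne.comap_oddPos (h : SingletonOne π) : SingletonOne (π.comap (oddPos n)) :=
  fun x y hx hxy => oddPos_injective (h _ _ (by simp [hx]) hxy)

end Extensions

theorem stmt14_general (n : ℕ) :
    (∀ τ : Setoid (Fin n), NonCrossingPart τ → SingletonOne τ →
      ∃! π : Setoid (Fin (2 * n)), IsKrewerasExtension n τ π) ∧
    (∀ (τ : Setoid (Fin n)) (π : Setoid (Fin (2 * n))),
      NonCrossingPart τ → SingletonOne τ → IsKrewerasExtension n τ π → MemBNC' n π) ∧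
    (∀ π : Setoid (Fin (2 * n)), MemBNC' n π →
      ∃ τ : Setoid (Fin n), NonCrossingPart τ ∧ SingletonOne τ ∧
        IsKrewerasExtension n τ π) ∧
    (∀ (τ₁ τ₂ : Setoid (Fin n)) (π : Setoid (Fin (2 * n))),
      IsKrewerasExtension n τ₁ π → IsKrewerasExtension n τ₂ π → τ₁ = τ₂) := by
  refine ⟨fun τ hτ _ => ?_, fun τ π hτ hτ₁ hπ => ?_, fun π hπ => ?_, ?_⟩
  · exact ⟨_, isKrewerasExtension_krewerasUnion hτ,
      fun _ hπ => hπ.unique (isKrewerasExtension_krewerasUnion hτ)⟩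
  · rw [hπ.unique (isKrewerasExtension_krewerasUnion hτ)]
    exact ⟨nonCrossingPart_krewerasUnion hτ, singletonOne_krewerasUnion hτ₁,
      noParityMix_krewerasUnion, krewerasUnion_sup_pairing_eq_top hτ⟩
  · exact ⟨_, hπ.1.comap oddPos_strictMono, hπ.2.1.comap_oddPos,
      isKrewerasExtension_of_memBNC' hπ⟩
  · rintro τ₁ τ₂ π ⟨⟨-, -, rfl⟩, -⟩ ⟨⟨-, -, rfl⟩, -⟩
    rfl

/-- For `n ≥ 1`, the map sending a non-crossing partition `τ` of the odd
numbers `{1,3,…,2n−1}` with `{1}` a singleton block to `τ ∪ K(τ)` (the Kreweras complement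
`K(τ)` placed on the even numbers `{2,4,…,2n}`) is a bijection onto `BNC'(n)`: every such
`τ` admits a unique Kreweras extension, this extension lies in `BNC'(n)`, every member of
`BNC'(n)` arises this way, and the assignment is injective. -/
theorem stmt14 (n : ℕ) (hn : 0 < n) :
    (∀ τ : Setoid (Fin n), NonCrossingPart τ → SingletonOne τ →
      ∃! π : Setoid (Fin (2 * n)), IsKrewerasExtension n τ π) ∧
    (∀ (τ : Setoid (Fin n)) (π : Setoid (Fin (2 * n))),
      NonCrossingPart τ → SingletonOne τ → IsKrewerasExtension n τ π → MemBNC' n π) ∧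
    (∀ π : Setoid (Fin (2 * n)), MemBNC' n π →
      ∃ τ : Setoid (Fin n), NonCrossingPart τ ∧ SingletonOne τ ∧
        IsKrewerasExtension n τ π) ∧
    (∀ (τ₁ τ₂ : Setoid (Fin n)) (π : Setoid (Fin (2 * n))),
      IsKrewerasExtension n τ₁ π → IsKrewerasExtension n τ₂ π → τ₁ = τ₂) :=
  stmt14_general n
end

section
/- Let (A, E, ε) be a B-B-non-commutative probability space, χ : {1,…,n} → {ℓ,r}, and suppose X ∈ A_ℓ, Y ∈ A_r satisfy E(Z X Y Z') = E(Z Y X Z') for all Z, Z' ∈ A. If χ(k₀) = ℓ and χ(k₀+1) = r, and χ' is obtained from χ by swapping the values at k₀ and k₀+1, then the bi-free cumulants satisfy κ^B_χ(Z₁,…,Z_{k₀−1}, X, Y, Z_{k₀+2},…,Z_n) = κ^B_{χ'}(Z₁,…,Z_{k₀−1}, Y, X, Z_{k₀+2},…,Z_n) for all Z_k ∈ A_{χ(k)} (k ≠ k₀, k₀+1). -/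
open scoped Classical

noncomputable section

/-- The rank of an index in the `≺_χ` order: left indices (`χ = true`) in increasing order
first, followed by right indices (`χ = false`) in decreasing order.  So
`i ≺_χ j ↔ chiRank χ i < chiRank χ j`. -/
def chiRank {n : ℕ} (χ : Fin n → Bool) (i : Fin n) : ℕ :=
  if χ i = true then (Finset.univ.filter fun k : Fin n => χ k = true ∧ k < i).card
  else (Finset.univ.filter fun k : Fin n => χ k = true).card +
    (Finset.univ.filter fun k : Fin n => χ k = false ∧ i < k).card

/-- `π` is bi-non-crossing with respect to `χ`: it is non-crossing in the `≺_χ` order,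
i.e. `s_χ⁻¹ · π` is non-crossing. -/
def IsBNC {n : ℕ} (χ : Fin n → Bool) (π : Setoid (Fin n)) : Prop :=
  ∀ a b c d : Fin n, chiRank χ a < chiRank χ b → chiRank χ b < chiRank χ c →
    chiRank χ c < chiRank χ d → π.r a c → π.r b d → π.r a b

/-- `V` is a `χ`-interval: an interval with respect to the `≺_χ` order. -/
def ChiInterval {n : ℕ} (χ : Fin n → Bool) (V : Finset (Fin n)) : Prop :=
  ∀ x ∈ V, ∀ z ∈ V, ∀ y : Fin n,
    chiRank χ x ≤ chiRank χ y → chiRank χ y ≤ chiRank χ z → y ∈ V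

/-- `V` is a union of blocks of `π`. -/
def UnionOfBlocks {n : ℕ} (π : Setoid (Fin n)) (V : Finset (Fin n)) : Prop :=
  ∀ x ∈ V, ∀ y : Fin n, π.r x y → y ∈ V

/-- The increasing enumeration of `V ⊆ Fin n`, used to restrict tuples/partitions to `V`. -/
def restFin {n : ℕ} (V : Finset (Fin n)) : Fin V.card → Fin n :=
  fun a => ((V.orderIsoOfFin rfl) a).1

/-- A `B`-`B`-non-commutative probability space: a unital algebra `A`, a pair of commuting
injective unital homomorphisms `L : B → A` and `R : Bᵐᵒᵖ → A` (encoding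
`ε : B ⊗ B^op → A`, `L_b = ε(b⊗1)`, `R_b = ε(1⊗b)`), and a linear map `E : A → B` with
`E(ε(b₁⊗b₂)Z) = b₁ E(Z) b₂` and `E(Z L_b) = E(Z R_b)`. -/
structure BBNCPS (B : Type) [Ring B] [Algebra ℂ B] : Type 1 where
  A : Type
  [ringA : Ring A]
  [algA : Algebra ℂ A]
  L : B →ₐ[ℂ] A
  R : Bᵐᵒᵖ →ₐ[ℂ] A
  comm : ∀ (b₁ : B) (b₂ : Bᵐᵒᵖ), L b₁ * R b₂ = R b₂ * L b₁
  Linj : Function.Injective L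
  Rinj : Function.Injective R
  E : A →ₗ[ℂ] B
  E_mul : ∀ (b₁ b₂ : B) (Z : A), E (L b₁ * R (MulOpposite.op b₂) * Z) = b₁ * E Z * b₂
  E_swap : ∀ (Z : A) (b : B), E (Z * L b) = E (Z * R (MulOpposite.op b))

attribute [instance] BBNCPS.ringA BBNCPS.algA

variable {B : Type} [Ring B] [Algebra ℂ B]

/-- The tuple `Z` is compatible with the side function `χ`: entries with `χ k = ℓ` lie in
the left algebra `A_ℓ` (they commute with all `R_b`), entries with `χ k = r` lie in the
right algebra `A_r` (they commute with all `L_b`). -/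
def SideOK (P : BBNCPS B) {n : ℕ} (χ : Fin n → Bool) (Z : Fin n → P.A) : Prop :=
  ∀ k : Fin n,
    (χ k = true → ∀ b : B, Z k * P.R (MulOpposite.op b) = P.R (MulOpposite.op b) * Z k) ∧
    (χ k = false → ∀ b : B, Z k * P.L b = P.L b * Z k)

/-- `Eb` agrees with the moment function on full partitions:
`E^B_{1_χ}(Z₁,…,Z_n) = E(Z₁⋯Z_n)`. -/
def AnchorsTop (P : BBNCPS B)
    (Eb : (n : ℕ) → (Fin n → Bool) → Setoid (Fin n) → (Fin n → P.A) → B) : Prop :=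
  ∀ (n : ℕ) (χ : Fin n → Bool) (Z : Fin n → P.A),
    Eb n χ ⊤ Z = P.E (((List.finRange n).map Z).prod)

/-- Bi-multiplicativity, property (3): if `V₁,…,V_m` are unions of blocks of `π` and
`χ`-intervals partitioning `{1,…,n}`, ordered by `≺_χ`, then
`E^B_π(Z) = E^B_{π|V₁}(Z|V₁) ⋯ E^B_{π|V_m}(Z|V_m)`. -/
def FactorsOverIntervals (P : BBNCPS B)
    (Eb : (n : ℕ) → (Fin n → Bool) → Setoid (Fin n) → (Fin n → P.A) → B) : Prop :=
  ∀ (n : ℕ) (χ : Fin n → Bool) (π : Setoid (Fin n)) (Z : Fin n → P.A),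
    SideOK P χ Z → IsBNC χ π →
    ∀ (m : ℕ) (Vs : Fin m → Finset (Fin n)),
      (∀ k : Fin n, ∃! i : Fin m, k ∈ Vs i) →
      (∀ i, (Vs i).Nonempty) →
      (∀ i, UnionOfBlocks π (Vs i)) →
      (∀ i, ChiInterval χ (Vs i)) →
      (∀ i j : Fin m, i < j → ∀ x ∈ Vs i, ∀ y ∈ Vs j, chiRank χ x < chiRank χ y) →
      Eb n χ π Z =
        ((List.finRange m).map fun i =>
          Eb (Vs i).card (χ ∘ restFin (Vs i)) (Setoid.comap (restFin (Vs i)) π)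
            (Z ∘ restFin (Vs i))).prod

/-- Bi-multiplicativity, property (4): if `V, W` are unions of blocks of `π` partitioning
`{1,…,n}`, `V` is a `χ`-interval, the `≺_χ`-minimum and `≺_χ`-maximum lie in `W`, and `p`
is the `≺_χ`-largest element of `W` preceding `V`, then `E^B_π(Z)` is obtained by evaluating
`E^B_{π|V}(Z|V)`, multiplying it into position `p` (as `Z_p L_{·}` if `χ(p) = ℓ`, as
`R_{·} Z_p` if `χ(p) = r`), and applying `E^B_{π|W}` to the resulting restricted tuple. -/
def NestsOverIntervals (P : BBNCPS B)
    (Eb : (n : ℕ) → (Fin n → Bool) → Setoid (Fin n) → (Fin n → P.A) → B) : Prop :=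
  ∀ (n : ℕ) (χ : Fin n → Bool) (π : Setoid (Fin n)) (Z : Fin n → P.A),
    SideOK P χ Z → IsBNC χ π →
    ∀ (V W : Finset (Fin n)), V.Nonempty → W.Nonempty → Disjoint V W →
      V ∪ W = Finset.univ → UnionOfBlocks π V → UnionOfBlocks π W → ChiInterval χ V →
      (∃ w ∈ W, ∀ v ∈ V, chiRank χ v < chiRank χ w) →
      ∀ p : Fin n, p ∈ W → (∀ v ∈ V, chiRank χ p < chiRank χ v) →
        (∀ w ∈ W, (∀ v ∈ V, chiRank χ w < chiRank χ v) → chiRank χ w ≤ chiRank χ p) →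
        Eb n χ π Z =
          Eb W.card (χ ∘ restFin W) (Setoid.comap (restFin W) π)
            ((Function.update Z p
              (if χ p then
                Z p * P.L (Eb V.card (χ ∘ restFin V) (Setoid.comap (restFin V) π)
                  (Z ∘ restFin V))
               else
                P.R (MulOpposite.op (Eb V.card (χ ∘ restFin V)
                  (Setoid.comap (restFin V) π) (Z ∘ restFin V))) * Z p)) ∘ restFin W)

/-- `μ` is the bi-non-crossing Möbius function: it vanishes on non-refinements and
satisfies the defining recursions on each lattice `BNC(χ)`. -/
def MoebiusBNC (μ : (n : ℕ) → (Fin n → Bool) → Setoid (Fin n) → Setoid (Fin n) → ℂ) :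
    Prop :=
  (∀ (n : ℕ) (χ : Fin n → Bool) (π σ : Setoid (Fin n)), ¬ π ≤ σ → μ n χ π σ = 0) ∧
  (∀ (n : ℕ) (χ : Fin n → Bool) (π σ : Setoid (Fin n)),
    IsBNC χ π → IsBNC χ σ → π ≤ σ →
    (∑ᶠ τ ∈ {τ : Setoid (Fin n) | IsBNC χ τ ∧ π ≤ τ ∧ τ ≤ σ}, μ n χ τ σ)
      = if π = σ then 1 else 0) ∧
  (∀ (n : ℕ) (χ : Fin n → Bool) (π σ : Setoid (Fin n)),
    IsBNC χ π → IsBNC χ σ → π ≤ σ →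
    (∑ᶠ τ ∈ {τ : Setoid (Fin n) | IsBNC χ τ ∧ π ≤ τ ∧ τ ≤ σ}, μ n χ π τ)
      = if π = σ then 1 else 0)

/-!
Let `s` be the transposition of the adjacent positions `k₀, k₀ + 1`. It exchanges a left and a
right index, so the relabelling `x ↦ s x` carries `≺_{χ ∘ s}` onto `≺_χ`
(`chiRank (χ ∘ s) = chiRank χ ∘ s`). Hence `σ ↦ σ ∘ s` is a lattice isomorphism
`BNC(χ) ≅ BNC(χ ∘ s)` fixing `1`, and it preserves `μ_BNC(·, 1)`, which is pinned down by its
defining recursion (downward induction on `σ`).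

It remains to show `E^B_σ(Z) = E^B_{σ ∘ s}(Z ∘ s)`, by strong induction on `n`. For `σ = 1` both
sides are moments, `E(⋯ X Y ⋯)` and `E(⋯ Y X ⋯)`. Otherwise a block `V` of `σ` of minimal
`≺_χ`-span is a `χ`-interval, and bi-multiplicativity writes `E^B_σ` either as
`E^B_{σ|V} E^B_{σ|Vᶜ}` or by nesting `E^B_{σ|V}` into the position `p` just before `V`; the same
decomposition, transported along `s`, applies on the other side. A restriction to a set holding at
most one of `k₀, k₀ + 1` is unchanged by `s`, one holding both is covered by induction. Nesting
replaces `X` by `X L_β` or `Y` by `R_β Y`, which keeps `E(Z X Y Z') = E(Z Y X Z')` because `Y`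
commutes with `L_β` and `X` with `R_β`.
-/

instance Setoid.instFinite {α : Type*} [Finite α] : Finite (Setoid α) :=
  Finite.of_injective (fun σ : Setoid α => σ.r) fun _ _ h => Setoid.ext fun x y => by
    simp only at h
    rw [h]

def Setoid.comapOrderIso {α β : Type*} (e : α ≃ β) : Setoid β ≃o Setoid α where
  toFun σ := σ.comap e
  invFun σ := σ.comap e.symm
  left_inv σ := by ext; simp [Setoid.comap_rel]
  right_inv σ := by ext; simp [Setoid.comap_rel]
  map_rel_iff' {σ τ} := by
    refine ⟨fun h x y hxy => ?_, fun h _ _ hxy => h hxy⟩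
    have := @h (e.symm x) (e.symm y) (show σ (e (e.symm x)) (e (e.symm y)) by simpa using hxy)
    change τ (e (e.symm x)) (e (e.symm y)) at this
    simpa using this

theorem eq_of_finsum_mem_eq {α M : Type*} [AddCommGroup M] {s : Set α} (hs : s.Finite)
    {f g : α → M} (h : ∑ᶠ x ∈ s, f x = ∑ᶠ x ∈ s, g x) {a : α} (ha : a ∈ s)
    (hfg : ∀ x ∈ s, x ≠ a → f x = g x) : f a = g a := by
  rw [← Set.insert_eq_of_mem ha, ← Set.insert_sdiff_singleton,
    finsum_mem_insert _ (by simp) hs.sdiff, finsum_mem_insert _ (by simp) hs.sdiff,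
    finsum_mem_congr rfl fun x hx => hfg x hx.1 hx.2] at h
  exact add_right_cancel h

theorem card_lt_of_compl_nonempty {m : ℕ} {U : Finset (Fin m)} (hU : Uᶜ.Nonempty) :
    U.card < m := by
  simpa using (Finset.card_compl_lt_iff_nonempty Uᶜ).2 hU

theorem List.prod_eq_take_mul_mul_drop {M : Type*} [Monoid M] (l : List M) {i : ℕ}
    (h : i + 1 < l.length) :
    l.prod = (l.take i).prod * l[i] * l[i + 1] * (l.drop (i + 2)).prod := by
  conv_lhs => rw [← List.take_append_drop i l, List.drop_eq_getElem_cons (by omega),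
    List.drop_eq_getElem_cons h]
  simp only [List.prod_append, List.prod_cons, mul_assoc]

section Swap

variable {m : ℕ} {a b : Fin m}

theorem exists_prod_map_finRange_comp_swap {M : Type*} [Monoid M] (hab : (a : ℕ) + 1 = b)
    (Z : Fin m → M) :
    ∃ l r : M, ((List.finRange m).map Z).prod = l * Z a * Z b * r ∧
      ((List.finRange m).map (Z ∘ Equiv.swap a b)).prod = l * Z b * Z a * r := by
  have split : ∀ W : Fin m → M, ((List.finRange m).map W).prod =
      (((List.finRange m).map W).take a).prod * W a * W b *
        (((List.finRange m).map W).drop (a + 2)).prod := fun W => by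
    rw [List.prod_eq_take_mul_mul_drop _ (i := a) (by simpa using hab ▸ b.isLt)]
    simp [hab]
  have fixed : ∀ i : Fin m, (i : ℕ) ≠ a → (i : ℕ) ≠ b → Equiv.swap a b i = i := fun i ha hb =>
    Equiv.swap_apply_of_ne_of_ne (fun h => ha (by rw [h])) (fun h => hb (by rw [h]))
  have htake : ((List.finRange m).map (Z ∘ Equiv.swap a b)).take a =
      ((List.finRange m).map Z).take a := List.ext_getElem (by simp) fun i h _ => by
    simp only [List.length_take, List.length_map, List.length_finRange] at h
    simp [fixed ⟨i, by omega⟩ (by dsimp only; omega) (by dsimp only; omega)]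
  have hdrop : ((List.finRange m).map (Z ∘ Equiv.swap a b)).drop (a + 2) =
      ((List.finRange m).map Z).drop (a + 2) := List.ext_getElem (by simp) fun i h _ => by
    simp only [List.length_drop, List.length_map, List.length_finRange] at h
    simp [fixed ⟨a + 2 + i, by omega⟩ (by dsimp only; omega) (by dsimp only; omega)]
  refine ⟨_, _, split Z, ?_⟩
  rw [split, htake, hdrop]
  simp

theorem swap_lt_swap_iff (hab : (a : ℕ) + 1 = b) {x y : Fin m} (h₁ : ¬(x = a ∧ y = b))
    (h₂ : ¬(x = b ∧ y = a)) : Equiv.swap a b x < Equiv.swap a b y ↔ x < y := by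
  simp only [Equiv.swap_apply_def]
  split_ifs <;> simp only [Fin.lt_def, Fin.ext_iff, not_and] at * <;> omega

theorem mem_image_swap {U : Finset (Fin m)} {x : Fin m} :
    x ∈ U.image (Equiv.swap a b) ↔ Equiv.swap a b x ∈ U := by
  rw [Finset.mem_image]
  exact ⟨fun ⟨y, hy, hyx⟩ => by rwa [← hyx, Equiv.swap_apply_self],
    fun hx => ⟨_, hx, Equiv.swap_apply_self a b x⟩⟩

theorem image_swap_compl (U : Finset (Fin m)) :
    Uᶜ.image (Equiv.swap a b) = (U.image (Equiv.swap a b))ᶜ := by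
  ext x
  simp only [mem_image_swap, Finset.mem_compl]

theorem image_swap_of_mem {U : Finset (Fin m)} (ha : a ∈ U) (hb : b ∈ U) :
    U.image (Equiv.swap a b) = U := by
  ext x
  rw [mem_image_swap, Equiv.swap_apply_def]
  split_ifs <;> simp_all

theorem comp_swap_eq_ite {α : Type*} {n k₀ : ℕ} (hk : k₀ + 1 < n) (f : Fin n → α) :
    f ∘ Equiv.swap ⟨k₀, Nat.lt_of_succ_lt hk⟩ ⟨k₀ + 1, hk⟩ = fun k : Fin n =>
      if (k : ℕ) = k₀ then f ⟨k₀ + 1, hk⟩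
      else if (k : ℕ) = k₀ + 1 then f ⟨k₀, Nat.lt_of_succ_lt hk⟩ else f k := by
  funext k
  simp only [Function.comp_apply, Equiv.swap_apply_def, Fin.ext_iff]
  split_ifs <;> rfl

end Swap

section ChiOrder

variable {m : ℕ}

/-- `ChiPrec χ x y` is the relation `x ≺_χ y` of the paper. -/
def ChiPrec (χ : Fin m → Bool) (x y : Fin m) : Prop :=
  χ x = true ∧ χ y = true ∧ x < y ∨ χ x = true ∧ χ y = false ∨
    χ x = false ∧ χ y = false ∧ y < x

variable {χ : Fin m → Bool}

theorem chiPrec_irrefl (x : Fin m) : ¬ ChiPrec χ x x := by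
  grind [ChiPrec]

theorem chiPrec_trans {x y z : Fin m} : ChiPrec χ x y → ChiPrec χ y z → ChiPrec χ x z := by
  grind [ChiPrec]

theorem chiPrec_trichotomous (x y : Fin m) : ChiPrec χ x y ∨ x = y ∨ ChiPrec χ y x := by
  grind [ChiPrec]

theorem chiRank_eq_card (χ : Fin m → Bool) (x : Fin m) :
    chiRank χ x = (Finset.univ.filter fun k => ChiPrec χ k x).card := by
  unfold chiRank ChiPrec
  cases hx : χ x
  · simp only [Bool.false_eq_true, if_false, and_true, and_false, false_and, false_or]
    rw [Finset.filter_or, Finset.card_union_of_disjoint]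
    · simp
    · rw [Finset.disjoint_filter]
      intro k _ h₁ h₂
      simp [h₁] at h₂
  · simp

theorem chiRank_lt_iff {x y : Fin m} : chiRank χ x < chiRank χ y ↔ ChiPrec χ x y := by
  rw [chiRank_eq_card, chiRank_eq_card]
  constructor
  · intro h
    by_contra hxy
    refine h.not_ge (Finset.card_le_card fun k hk => ?_)
    simp only [Finset.mem_filter, Finset.mem_univ, true_and] at hk ⊢
    rcases chiPrec_trichotomous x y with h' | rfl | h'
    · exact absurd h' hxy
    · exact hk
    · exact chiPrec_trans hk h'
  · intro h
    refine Finset.card_lt_card (Finset.ssubset_iff_of_subset (fun k hk => ?_) |>.2 ⟨x, ?_, ?_⟩)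
    · simp only [Finset.mem_filter, Finset.mem_univ, true_and] at hk ⊢
      exact chiPrec_trans hk h
    · simpa using h
    · simpa using chiPrec_irrefl x

theorem chiRank_injective (χ : Fin m → Bool) : Function.Injective (chiRank χ) := by
  intro x y h
  rcases chiPrec_trichotomous (χ := χ) x y with h' | h' | h'
  · exact absurd h (chiRank_lt_iff.2 h').ne
  · exact h'
  · exact absurd h (chiRank_lt_iff.2 h').ne'

theorem chiRank_comp_of_chiPrec_iff {e : Equiv.Perm (Fin m)}
    (he : ∀ x y, ChiPrec (χ ∘ e) x y ↔ ChiPrec χ (e x) (e y)) :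
    chiRank (χ ∘ e) = chiRank χ ∘ e := by
  funext x
  rw [Function.comp_apply, chiRank_eq_card, chiRank_eq_card]
  exact Finset.card_equiv e fun k => by simp [he]

theorem chiRank_comp_swap {a b : Fin m} (hab : (a : ℕ) + 1 = b) (hχ : χ a ≠ χ b) :
    chiRank (χ ∘ Equiv.swap a b) = chiRank χ ∘ Equiv.swap a b := by
  refine chiRank_comp_of_chiPrec_iff fun x y => ?_
  have key : ∀ x y, χ (Equiv.swap a b x) = χ (Equiv.swap a b y) →
      (Equiv.swap a b x < Equiv.swap a b y ↔ x < y) := fun x y h =>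
    swap_lt_swap_iff hab
      (by rintro ⟨rfl, rfl⟩; rw [Equiv.swap_apply_left, Equiv.swap_apply_right] at h; exact hχ h.symm)
      (by rintro ⟨rfl, rfl⟩; rw [Equiv.swap_apply_left, Equiv.swap_apply_right] at h; exact hχ h)
  have := key x y
  have := key y x
  simp only [ChiPrec, Function.comp_apply]
  grind

theorem chiRank_comp_lt_iff_of_strictMono {k : ℕ} {f : Fin k → Fin m} (hf : StrictMono f)
    {i j : Fin k} : chiRank (χ ∘ f) i < chiRank (χ ∘ f) j ↔ chiRank χ (f i) < chiRank χ (f j) := by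
  simp only [chiRank_lt_iff, ChiPrec, Function.comp_apply, hf.lt_iff_lt]

end ChiOrder

section Relabel

variable {m : ℕ} {χ : Fin m → Bool} {e : Equiv.Perm (Fin m)}

theorem isBNC_comap_iff (he : chiRank (χ ∘ e) = chiRank χ ∘ e) {σ : Setoid (Fin m)} :
    IsBNC (χ ∘ e) (σ.comap e) ↔ IsBNC χ σ := by
  simp only [IsBNC, he, Function.comp_apply, Setoid.comap_rel]
  refine ⟨fun h x y z w => ?_, fun h x y z w => h (e x) (e y) (e z) (e w)⟩
  simpa using h (e.symm x) (e.symm y) (e.symm z) (e.symm w)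

theorem isBNC_top (χ : Fin m → Bool) : IsBNC χ ⊤ := fun _ _ _ _ _ _ _ _ _ => trivial

theorem MoebiusBNC.apply_comap_top
    {μ : (n : ℕ) → (Fin n → Bool) → Setoid (Fin n) → Setoid (Fin n) → ℂ} (hμ : MoebiusBNC μ)
    (he : chiRank (χ ∘ e) = chiRank χ ∘ e) {π : Setoid (Fin m)} (hπ : IsBNC χ π) :
    μ m (χ ∘ e) (π.comap e) ⊤ = μ m χ π ⊤ := by
  induction π using WellFoundedGT.induction with
  | _ π IH =>
  set Φ := Setoid.comapOrderIso e
  have hmem : ∀ τ, Φ τ ∈ {τ | IsBNC (χ ∘ e) τ ∧ Φ π ≤ τ ∧ τ ≤ ⊤} ↔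
      τ ∈ {τ | IsBNC χ τ ∧ π ≤ τ ∧ τ ≤ ⊤} := fun τ => by
    simp only [Set.mem_ofPred_eq, Φ.le_iff_le, le_top, and_true]
    exact and_congr_left' (isBNC_comap_iff he)
  have hsum : ∑ᶠ τ ∈ {τ | IsBNC χ τ ∧ π ≤ τ ∧ τ ≤ ⊤}, μ m (χ ∘ e) (Φ τ) ⊤ =
      ∑ᶠ τ ∈ {τ | IsBNC χ τ ∧ π ≤ τ ∧ τ ≤ ⊤}, μ m χ τ ⊤ := by
    rw [finsum_mem_eq_of_bijOn Φ (Φ.toEquiv.bijOn hmem) (g := fun τ => μ m (χ ∘ e) τ ⊤)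
        fun _ _ => rfl,
      hμ.2.1 m (χ ∘ e) (Φ π) ⊤ ((isBNC_comap_iff he).2 hπ) (isBNC_top _) le_top,
      hμ.2.1 m χ π ⊤ hπ (isBNC_top χ) le_top, map_eq_top_iff]
  refine eq_of_finsum_mem_eq (Set.toFinite _) hsum ⟨hπ, le_rfl, le_top⟩ fun τ hτ hne => ?_
  exact IH τ (lt_of_le_of_ne hτ.2.1 (Ne.symm hne)) hτ.1

theorem UnionOfBlocks.image_swap {a b : Fin m} {σ : Setoid (Fin m)} {U : Finset (Fin m)}
    (hU : UnionOfBlocks σ U) :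
    UnionOfBlocks (σ.comap (Equiv.swap a b)) (U.image (Equiv.swap a b)) :=
  fun _ hx _ hxy => mem_image_swap.2 (hU _ (mem_image_swap.1 hx) _ hxy)

theorem ChiInterval.image_swap {a b : Fin m}
    (he : chiRank (χ ∘ Equiv.swap a b) = chiRank χ ∘ Equiv.swap a b) {U : Finset (Fin m)}
    (hU : ChiInterval χ U) : ChiInterval (χ ∘ Equiv.swap a b) (U.image (Equiv.swap a b)) := by
  intro x hx z hz y hxy hyz
  rw [mem_image_swap] at hx hz ⊢
  rw [he] at hxy hyz
  exact hU _ hx _ hz _ hxy hyz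

end Relabel

section Blocks

variable {m : ℕ} {χ : Fin m → Bool}

theorem exists_chiInterval_block [Nonempty (Fin m)] {σ : Setoid (Fin m)} (hσ : IsBNC χ σ) :
    ∃ x₀ : Fin m, ChiInterval χ (Finset.univ.filter (σ.r x₀)) := by
  let block : Fin m → Finset (Fin m) := fun x => Finset.univ.filter (σ.r x)
  let span : Fin m → ℕ := fun x =>
    (block x ×ˢ block x).sup fun q => chiRank χ q.2 - chiRank χ q.1
  obtain ⟨x₀, -, hmin⟩ := Finset.exists_min_image Finset.univ span Finset.univ_nonempty
  refine ⟨x₀, fun u hu z hz y huy hyz => ?_⟩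
  by_contra hy
  have hu' : σ.r x₀ u := by simpa using hu
  have hz' : σ.r x₀ z := by simpa using hz
  have hout : ∀ w, σ.r y w → ¬ σ.r x₀ w := fun w hw h =>
    hy (by simpa using σ.trans' h (σ.symm' hw))
  have hne : ∀ w, σ.r y w → ∀ v, σ.r x₀ v → chiRank χ w ≠ chiRank χ v := fun w hw v hv h =>
    hout w hw (chiRank_injective χ h ▸ hv)
  have hlt₁ : chiRank χ u < chiRank χ y := lt_of_le_of_ne huy (hne y (σ.refl' y) u hu').symm
  have hlt₂ : chiRank χ y < chiRank χ z := lt_of_le_of_ne hyz (hne y (σ.refl' y) z hz')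
  -- by non-crossing, the block of `y` lies strictly between `u` and `z`, so its span is smaller
  have inside : ∀ w, σ.r y w → chiRank χ u < chiRank χ w ∧ chiRank χ w < chiRank χ z := by
    intro w hw
    constructor
    · by_contra h
      have h' := lt_of_le_of_ne (not_lt.1 h) (hne w hw u hu')
      exact hout w hw (σ.trans' hu' (σ.symm' (hσ w u y z h' hlt₁ hlt₂ (σ.symm' hw)
        (σ.trans' (σ.symm' hu') hz'))))
    · by_contra h
      have h' := lt_of_le_of_ne (not_lt.1 h) (hne w hw z hz').symm
      exact hout y (σ.refl' y) (σ.trans' hu' (hσ u y z w hlt₁ hlt₂ h'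
        (σ.trans' (σ.symm' hu') hz') hw))
  have hspan : span y < span x₀ := calc
    span y < chiRank χ z - chiRank χ u := by
      refine (Finset.sup_lt_iff (Nat.sub_pos_of_lt (hlt₁.trans hlt₂))).2 fun q hq => ?_
      simp only [block, Finset.mem_product, Finset.mem_filter, Finset.mem_univ, true_and] at hq
      have := inside _ hq.1
      have := inside _ hq.2
      omega
    _ ≤ span x₀ := Finset.le_sup (f := fun q => chiRank χ q.2 - chiRank χ q.1) (b := (u, z))
      (Finset.mem_product.2 ⟨hu, hz⟩)
  exact (hmin y (Finset.mem_univ y)).not_gt hspan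

theorem ChiInterval.forall_lt_or_forall_lt {V : Finset (Fin m)} (hV : ChiInterval χ V)
    {w : Fin m} (hw : w ∉ V) :
    (∀ v ∈ V, chiRank χ w < chiRank χ v) ∨ ∀ v ∈ V, chiRank χ v < chiRank χ w := by
  by_contra! h
  obtain ⟨⟨v₁, hv₁, h₁⟩, v₂, hv₂, h₂⟩ := h
  exact hw (hV v₁ hv₁ v₂ hv₂ w h₁ h₂)

theorem chiInterval_of_forall_lt {U : Finset (Fin m)}
    (hlt : ∀ x ∈ U, ∀ y ∉ U, chiRank χ x < chiRank χ y) :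
    ChiInterval χ U ∧ ChiInterval χ Uᶜ :=
  ⟨fun _ _ z hz y _ hyz => by_contra fun hy => (hlt z hz y hy).not_ge hyz,
    fun x hx _ _ y hxy _ => Finset.mem_compl.2 fun hy =>
      (hlt y hy x (Finset.mem_compl.1 hx)).not_ge hxy⟩

theorem unionOfBlocks_filter_rel (σ : Setoid (Fin m)) (x : Fin m) :
    UnionOfBlocks σ (Finset.univ.filter (σ.r x)) := fun y hy z hyz => by
  simp only [Finset.mem_filter, Finset.mem_univ, true_and] at hy ⊢
  exact σ.trans' hy hyz

theorem nonempty_compl_filter_rel_of_ne_top {σ : Setoid (Fin m)} (hσ : σ ≠ ⊤) (x : Fin m) :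
    (Finset.univ.filter (σ.r x))ᶜ.Nonempty := by
  by_contra h
  have hall : ∀ y, σ.r x y := fun y => by_contra fun hy => h ⟨y, by simpa using hy⟩
  exact hσ (eq_top_iff.2 fun y z _ => σ.trans' (σ.symm' (hall y)) (hall z))

theorem UnionOfBlocks.compl {σ : Setoid (Fin m)} {U : Finset (Fin m)} (hU : UnionOfBlocks σ U) :
    UnionOfBlocks σ Uᶜ := fun x hx y hxy =>
  Finset.mem_compl.2 fun hy => Finset.mem_compl.1 hx (hU y hy x (σ.symm' hxy))

end Blocks

theorem FactorsOverIntervals.eq_mul_compl {P : BBNCPS B}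
    {Eb : (n : ℕ) → (Fin n → Bool) → Setoid (Fin n) → (Fin n → P.A) → B}
    (hFac : FactorsOverIntervals P Eb) {n : ℕ} {χ : Fin n → Bool} {σ : Setoid (Fin n)}
    {Z : Fin n → P.A} (hZ : SideOK P χ Z) (hσ : IsBNC χ σ) {U : Finset (Fin n)}
    (hU : U.Nonempty) (hUc : Uᶜ.Nonempty) (hUb : UnionOfBlocks σ U)
    (hlt : ∀ x ∈ U, ∀ y ∉ U, chiRank χ x < chiRank χ y) :
    Eb n χ σ Z = Eb U.card (χ ∘ restFin U) (σ.comap (restFin U)) (Z ∘ restFin U) *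
      Eb Uᶜ.card (χ ∘ restFin Uᶜ) (σ.comap (restFin Uᶜ)) (Z ∘ restFin Uᶜ) := by
  have hcover : ∀ k, ∃! i : Fin 2, k ∈ ![U, Uᶜ] i := fun k => by
    by_cases hk : k ∈ U
    · exact ⟨0, by simpa using hk, Fin.forall_fin_two.2 ⟨fun _ => rfl, fun h => by simp_all⟩⟩
    · exact ⟨1, by simpa using hk, Fin.forall_fin_two.2 ⟨fun h => by simp_all, fun _ => rfl⟩⟩
  have hord : ∀ i j : Fin 2, i < j → ∀ x ∈ ![U, Uᶜ] i, ∀ y ∈ ![U, Uᶜ] j,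
      chiRank χ x < chiRank χ y := by
    simp only [Fin.forall_fin_two]
    simp_all
  simpa [List.finRange_succ] using hFac n χ σ Z hZ hσ 2 ![U, Uᶜ] hcover
    (Fin.forall_fin_two.2 ⟨hU, hUc⟩) (Fin.forall_fin_two.2 ⟨hUb, hUb.compl⟩)
    (Fin.forall_fin_two.2 (chiInterval_of_forall_lt hlt)) hord

theorem NestsOverIntervals.eq_compl {P : BBNCPS B}
    {Eb : (n : ℕ) → (Fin n → Bool) → Setoid (Fin n) → (Fin n → P.A) → B}
    (hNest : NestsOverIntervals P Eb) {n : ℕ} {χ : Fin n → Bool} {σ : Setoid (Fin n)}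
    {Z : Fin n → P.A} (hZ : SideOK P χ Z) (hσ : IsBNC χ σ) {V : Finset (Fin n)}
    (hV : V.Nonempty) (hVb : UnionOfBlocks σ V) (hVi : ChiInterval χ V) {w : Fin n} (hwV : w ∉ V)
    (hw : ∀ v ∈ V, chiRank χ v < chiRank χ w) {p : Fin n} (hpV : p ∉ V)
    (hp : ∀ v ∈ V, chiRank χ p < chiRank χ v)
    (hpmax : ∀ x ∉ V, (∀ v ∈ V, chiRank χ x < chiRank χ v) → chiRank χ x ≤ chiRank χ p) :
    Eb n χ σ Z = Eb Vᶜ.card (χ ∘ restFin Vᶜ) (σ.comap (restFin Vᶜ))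
      (Function.update Z p
        (if χ p then Z p * P.L (Eb V.card (χ ∘ restFin V) (σ.comap (restFin V)) (Z ∘ restFin V))
          else P.R (MulOpposite.op (Eb V.card (χ ∘ restFin V) (σ.comap (restFin V))
            (Z ∘ restFin V))) * Z p) ∘ restFin Vᶜ) :=
  hNest n χ σ Z hZ hσ V Vᶜ hV ⟨w, Finset.mem_compl.2 hwV⟩ disjoint_compl_right
    (Finset.union_compl V) hVb hVb.compl hVi ⟨w, Finset.mem_compl.2 hwV, hw⟩ p
    (Finset.mem_compl.2 hpV) hp fun x hx => hpmax x (Finset.mem_compl.1 hx)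

section Restrict

variable {m : ℕ}

theorem restFin_mem (V : Finset (Fin m)) (i : Fin V.card) : restFin V i ∈ V :=
  (V.orderIsoOfFin rfl i).2

theorem restFin_strictMono (V : Finset (Fin m)) : StrictMono (restFin V) :=
  fun _ _ h => (V.orderIsoOfFin rfl).lt_iff_lt.2 h

theorem exists_restFin_eq {V : Finset (Fin m)} {x : Fin m} (hx : x ∈ V) :
    ∃ i, restFin V i = x :=
  ⟨(V.orderIsoOfFin rfl).symm ⟨x, hx⟩, by simp [restFin]⟩

theorem eq_restFin_of_strictMono {V : Finset (Fin m)} {f : Fin V.card → Fin m}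
    (hmem : ∀ i, f i ∈ V) (hf : StrictMono f) : f = restFin V :=
  Finset.orderEmbOfFin_unique rfl hmem hf

theorem IsBNC.comap_of_strictMono {k : ℕ} {χ : Fin m → Bool} {σ : Setoid (Fin m)}
    (hσ : IsBNC χ σ) {f : Fin k → Fin m} (hf : StrictMono f) : IsBNC (χ ∘ f) (σ.comap f) :=
  fun p q r t h₁ h₂ h₃ => hσ (f p) (f q) (f r) (f t)
    ((chiRank_comp_lt_iff_of_strictMono hf).1 h₁) ((chiRank_comp_lt_iff_of_strictMono hf).1 h₂)
    ((chiRank_comp_lt_iff_of_strictMono hf).1 h₃)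

variable {a b : Fin m}

theorem restFin_image_swap (hab : (a : ℕ) + 1 = b) {U : Finset (Fin m)} (hU : ¬(a ∈ U ∧ b ∈ U)) :
    restFin (U.image (Equiv.swap a b)) = Equiv.swap a b ∘ restFin U ∘
      Fin.cast (U.card_image_of_injective (Equiv.swap a b).injective) := by
  refine (eq_restFin_of_strictMono (fun i => ?_) fun i j hij => ?_).symm
  · simp [restFin_mem]
  · have hi := restFin_mem U (Fin.cast (U.card_image_of_injective (Equiv.swap a b).injective) i)
    have hj := restFin_mem U (Fin.cast (U.card_image_of_injective (Equiv.swap a b).injective) j)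
    refine (swap_lt_swap_iff hab ?_ ?_).2 (restFin_strictMono U hij)
    · rintro ⟨h₁, h₂⟩
      exact hU ⟨h₁ ▸ hi, h₂ ▸ hj⟩
    · rintro ⟨h₁, h₂⟩
      exact hU ⟨h₂ ▸ hj, h₁ ▸ hi⟩

theorem exists_restFin_eq_of_adjacent (hab : (a : ℕ) + 1 = b) {U : Finset (Fin m)} (ha : a ∈ U)
    (hb : b ∈ U) : ∃ j j' : Fin U.card, (j : ℕ) + 1 = j' ∧ restFin U j = a ∧ restFin U j' = b := by
  obtain ⟨j, rfl⟩ := exists_restFin_eq ha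
  obtain ⟨j', rfl⟩ := exists_restFin_eq hb
  refine ⟨j, j', ?_, rfl, rfl⟩
  have hlt : j < j' := (restFin_strictMono U).lt_iff_lt.1 (Fin.lt_def.2 (by omega))
  by_contra hne
  have h₁ := restFin_strictMono U (show j < ⟨j + 1, by omega⟩ from Fin.lt_def.2 (by simp))
  have h₂ := restFin_strictMono U (show ⟨j + 1, by omega⟩ < j' from Fin.lt_def.2 (by
    simp only; omega))
  rw [Fin.lt_def] at h₁ h₂
  omega

end Restrict

def ECommute (P : BBNCPS B) (x y : P.A) : Prop :=
  ∀ Zl Zr : P.A, P.E (Zl * x * y * Zr) = P.E (Zl * y * x * Zr)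

theorem ECommute.mul_right {P : BBNCPS B} {x y w : P.A} (h : ECommute P x y)
    (hw : Commute w y) : ECommute P (x * w) y := fun Zl Zr => by
  have := h Zl (w * Zr)
  simp only [mul_assoc] at this ⊢
  rwa [hw.left_comm]

theorem ECommute.mul_left {P : BBNCPS B} {x y w : P.A} (h : ECommute P x y)
    (hw : Commute x w) : ECommute P x (w * y) := fun Zl Zr => by
  have := h (Zl * w) Zr
  simp only [mul_assoc] at this ⊢
  rwa [hw.left_comm]

section Side

variable {P : BBNCPS B} {n : ℕ} {χ : Fin n → Bool} {Z : Fin n → P.A}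

theorem SideOK.comp (hZ : SideOK P χ Z) {k : ℕ} (f : Fin k → Fin n) :
    SideOK P (χ ∘ f) (Z ∘ f) :=
  fun i => hZ (f i)

theorem SideOK.update_nest (hZ : SideOK P χ Z) (p : Fin n) (β : B) :
    SideOK P χ (Function.update Z p
      (if χ p then Z p * P.L β else P.R (MulOpposite.op β) * Z p)) := by
  intro k
  rcases eq_or_ne k p with rfl | hk
  · rw [Function.update_self]
    refine ⟨fun hχk b => ?_, fun hχk b => ?_⟩
    · rw [if_pos hχk]
      exact Commute.mul_left ((hZ k).1 hχk b) (P.comm β _)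
    · rw [if_neg (by simp [hχk])]
      exact Commute.mul_left (P.comm b _).symm ((hZ k).2 hχk b)
  · rw [Function.update_of_ne hk]
    exact hZ k

theorem ECommute.update_nest (hZ : SideOK P χ Z) {a b : Fin n} (hab : a ≠ b) (hχa : χ a = true)
    (hχb : χ b = false) (hc : ECommute P (Z a) (Z b)) (p : Fin n) (β : B) :
    ECommute P
      (Function.update Z p (if χ p then Z p * P.L β else P.R (MulOpposite.op β) * Z p) a)
      (Function.update Z p (if χ p then Z p * P.L β else P.R (MulOpposite.op β) * Z p) b) := by
  rcases eq_or_ne a p with rfl | hpa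
  · rw [Function.update_self, Function.update_of_ne hab.symm, if_pos hχa]
    exact hc.mul_right ((hZ b).2 hχb β).symm
  rcases eq_or_ne b p with rfl | hpb
  · rw [Function.update_self, Function.update_of_ne hab, if_neg (by simp [hχb])]
    exact hc.mul_left ((hZ a).1 hχa β)
  rwa [Function.update_of_ne hpa, Function.update_of_ne hpb]

end Side

theorem eb_comp_finCast {P : BBNCPS B}
    (Eb : (n : ℕ) → (Fin n → Bool) → Setoid (Fin n) → (Fin n → P.A) → B) {c₁ c₂ : ℕ}
    (h : c₁ = c₂) (χ : Fin c₂ → Bool) (σ : Setoid (Fin c₂)) (Z : Fin c₂ → P.A) :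
    Eb c₁ (χ ∘ Fin.cast h) (σ.comap (Fin.cast h)) (Z ∘ Fin.cast h) = Eb c₂ χ σ Z := by
  subst h
  rfl

section SwapInvariance

def SwapInvariantAt (P : BBNCPS B)
    (Eb : (n : ℕ) → (Fin n → Bool) → Setoid (Fin n) → (Fin n → P.A) → B) (m : ℕ) : Prop :=
  ∀ (a b : Fin m), (a : ℕ) + 1 = b → ∀ (χ : Fin m → Bool), χ a = true → χ b = false →
    ∀ (σ : Setoid (Fin m)), IsBNC χ σ → ∀ (Z : Fin m → P.A), SideOK P χ Z →
      ECommute P (Z a) (Z b) →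
      Eb m χ σ Z = Eb m (χ ∘ Equiv.swap a b) (σ.comap (Equiv.swap a b)) (Z ∘ Equiv.swap a b)

variable {P : BBNCPS B} {Eb : (n : ℕ) → (Fin n → Bool) → Setoid (Fin n) → (Fin n → P.A) → B}
  {m : ℕ} {a b : Fin m} {χ : Fin m → Bool} {σ : Setoid (Fin m)} {Z : Fin m → P.A}

theorem eb_restrict_image_swap {U : Finset (Fin m)} (hU : SwapInvariantAt P Eb U.card)
    (hab : (a : ℕ) + 1 = b) (hχa : χ a = true) (hχb : χ b = false) (hσ : IsBNC χ σ)
    (hZ : SideOK P χ Z) (hc : ECommute P (Z a) (Z b)) :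
    Eb (U.image (Equiv.swap a b)).card ((χ ∘ Equiv.swap a b) ∘ restFin (U.image (Equiv.swap a b)))
        ((σ.comap (Equiv.swap a b)).comap (restFin (U.image (Equiv.swap a b))))
        ((Z ∘ Equiv.swap a b) ∘ restFin (U.image (Equiv.swap a b))) =
      Eb U.card (χ ∘ restFin U) (σ.comap (restFin U)) (Z ∘ restFin U) := by
  by_cases hmem : a ∈ U ∧ b ∈ U
  · obtain ⟨j, j', hjj', hj, hj'⟩ := exists_restFin_eq_of_adjacent hab hmem.1 hmem.2
    have hcomm : Equiv.swap a b ∘ restFin U = restFin U ∘ Equiv.swap j j' := by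
      rw [← hj, ← hj']
      exact (restFin_strictMono U).injective.swap_comp j j'
    rw [image_swap_of_mem hmem.1 hmem.2, hU j j' hjj' (χ ∘ restFin U) (by simp [hj, hχa])
      (by simp [hj', hχb]) _ (hσ.comap_of_strictMono (restFin_strictMono U)) _ (hZ.comp _)
      (by simpa [hj, hj'] using hc)]
    have hσ' : (σ.comap (Equiv.swap a b)).comap (restFin U) =
        (σ.comap (restFin U)).comap (Equiv.swap j j') :=
      show σ.comap (Equiv.swap a b ∘ restFin U) = σ.comap (restFin U ∘ Equiv.swap j j') by
        rw [hcomm]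
    rw [Function.comp_assoc, Function.comp_assoc, hcomm, hσ']
    rfl
  · rw [restFin_image_swap hab hmem]
    convert eb_comp_finCast Eb (U.card_image_of_injective (Equiv.swap a b).injective)
      (χ ∘ restFin U) (σ.comap (restFin U)) (Z ∘ restFin U) using 2
    · funext i
      simp
    · ext i j
      simp [Setoid.comap_rel]
    · funext i
      simp

theorem eb_swap_top (hTop : AnchorsTop P Eb) (hab : (a : ℕ) + 1 = b)
    (hc : ECommute P (Z a) (Z b)) :
    Eb m χ ⊤ Z = Eb m (χ ∘ Equiv.swap a b) ((⊤ : Setoid (Fin m)).comap (Equiv.swap a b))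
      (Z ∘ Equiv.swap a b) := by
  obtain ⟨l, r, h, h'⟩ := exists_prod_map_finRange_comp_swap hab Z
  have htop : (⊤ : Setoid (Fin m)).comap (Equiv.swap a b) = ⊤ :=
    (Setoid.comapOrderIso (Equiv.swap a b)).map_top
  rw [htop, hTop, hTop, h, h']
  exact hc l r

theorem eb_swap_of_factor (hFac : FactorsOverIntervals P Eb)
    (IH : ∀ k < m, SwapInvariantAt P Eb k) (hab : (a : ℕ) + 1 = b) (hχa : χ a = true)
    (hχb : χ b = false) (hσ : IsBNC χ σ) (hZ : SideOK P χ Z) (hc : ECommute P (Z a) (Z b))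
    {U : Finset (Fin m)} (hU : U.Nonempty) (hUc : Uᶜ.Nonempty) (hUb : UnionOfBlocks σ U)
    (hlt : ∀ x ∈ U, ∀ y ∉ U, chiRank χ x < chiRank χ y) :
    Eb m χ σ Z = Eb m (χ ∘ Equiv.swap a b) (σ.comap (Equiv.swap a b)) (Z ∘ Equiv.swap a b) := by
  have he := chiRank_comp_swap hab (χ := χ) (by simp [hχa, hχb])
  have hlt' : ∀ x ∈ U.image (Equiv.swap a b), ∀ y ∉ U.image (Equiv.swap a b),
      chiRank (χ ∘ Equiv.swap a b) x < chiRank (χ ∘ Equiv.swap a b) y := by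
    intro x hx y hy
    rw [mem_image_swap] at hx hy
    rw [he]
    exact hlt _ hx _ hy
  rw [hFac.eq_mul_compl hZ hσ hU hUc hUb hlt, hFac.eq_mul_compl (hZ.comp _)
    ((isBNC_comap_iff he).2 hσ) (hU.image _) (image_swap_compl U ▸ hUc.image _) hUb.image_swap
    hlt', ← image_swap_compl,
    eb_restrict_image_swap (IH _ (card_lt_of_compl_nonempty hUc)) hab hχa hχb hσ hZ hc,
    eb_restrict_image_swap (IH _ (card_lt_of_compl_nonempty (by simpa using hU))) hab hχa hχb hσ
      hZ hc]

theorem eb_swap_of_nest (hNest : NestsOverIntervals P Eb)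
    (IH : ∀ k < m, SwapInvariantAt P Eb k) (hab : (a : ℕ) + 1 = b) (hχa : χ a = true)
    (hχb : χ b = false) (hσ : IsBNC χ σ) (hZ : SideOK P χ Z) (hc : ECommute P (Z a) (Z b))
    {V : Finset (Fin m)} (hV : V.Nonempty) (hVb : UnionOfBlocks σ V) (hVi : ChiInterval χ V)
    {w : Fin m} (hwV : w ∉ V) (hw : ∀ v ∈ V, chiRank χ v < chiRank χ w)
    {p : Fin m} (hpV : p ∉ V) (hp : ∀ v ∈ V, chiRank χ p < chiRank χ v)
    (hpmax : ∀ x ∉ V, (∀ v ∈ V, chiRank χ x < chiRank χ v) → chiRank χ x ≤ chiRank χ p) :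
    Eb m χ σ Z = Eb m (χ ∘ Equiv.swap a b) (σ.comap (Equiv.swap a b)) (Z ∘ Equiv.swap a b) := by
  have he := chiRank_comp_swap hab (χ := χ) (by simp [hχa, hχb])
  have hrank : ∀ x y, chiRank (χ ∘ Equiv.swap a b) x < chiRank (χ ∘ Equiv.swap a b) y ↔
      chiRank χ (Equiv.swap a b x) < chiRank χ (Equiv.swap a b y) := fun x y => by rw [he]; rfl
  have hpmax' : ∀ x ∉ V.image (Equiv.swap a b),
      (∀ v ∈ V.image (Equiv.swap a b), chiRank (χ ∘ Equiv.swap a b) x <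
        chiRank (χ ∘ Equiv.swap a b) v) →
      chiRank (χ ∘ Equiv.swap a b) x ≤ chiRank (χ ∘ Equiv.swap a b) (Equiv.swap a b p) := by
    intro x hx hxV
    rw [mem_image_swap] at hx
    have := hpmax _ hx fun v hv => by
      simpa [hrank] using hxV (Equiv.swap a b v) (mem_image_swap.2 (by simpa using hv))
    simpa [he] using this
  have hupd : ∀ c, Function.update (Z ∘ Equiv.swap a b) (Equiv.swap a b p) c =
      Function.update Z p c ∘ Equiv.swap a b := fun c => by
    rw [Function.update_comp_equiv, Equiv.symm_swap]
  have hχp : (χ ∘ Equiv.swap a b) (Equiv.swap a b p) = χ p := by simp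
  have hZp : (Z ∘ Equiv.swap a b) (Equiv.swap a b p) = Z p := by simp
  rw [hNest.eq_compl hZ hσ hV hVb hVi hwV hw hpV hp hpmax,
    hNest.eq_compl (hZ.comp _) ((isBNC_comap_iff he).2 hσ) (hV.image _) hVb.image_swap
      (hVi.image_swap he) (w := Equiv.swap a b w) (by simpa [mem_image_swap] using hwV)
      (Finset.forall_mem_image.2 fun v hv => by simpa [hrank] using hw v hv)
      (p := Equiv.swap a b p) (by simpa [mem_image_swap] using hpV)
      (Finset.forall_mem_image.2 fun v hv => by simpa [hrank] using hp v hv) hpmax',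
    eb_restrict_image_swap (IH _ (card_lt_of_compl_nonempty ⟨w, Finset.mem_compl.2 hwV⟩)) hab
      hχa hχb hσ hZ hc, hχp, hZp, hupd, ← image_swap_compl]
  exact (eb_restrict_image_swap (IH _ (card_lt_of_compl_nonempty (by simpa using hV))) hab hχa
    hχb hσ (hZ.update_nest p _)
    (hc.update_nest hZ (Fin.ne_of_val_ne (by omega)) hχa hχb p _)).symm

theorem eb_swap_of_ne_top (hFac : FactorsOverIntervals P Eb) (hNest : NestsOverIntervals P Eb)
    (IH : ∀ k < m, SwapInvariantAt P Eb k) (hab : (a : ℕ) + 1 = b) (hχa : χ a = true)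
    (hχb : χ b = false) (hσ : IsBNC χ σ) (hZ : SideOK P χ Z) (hc : ECommute P (Z a) (Z b))
    (htop : σ ≠ ⊤) :
    Eb m χ σ Z = Eb m (χ ∘ Equiv.swap a b) (σ.comap (Equiv.swap a b)) (Z ∘ Equiv.swap a b) := by
  have : Nonempty (Fin m) := ⟨a⟩
  obtain ⟨x₀, hVi⟩ := exists_chiInterval_block hσ
  have hV : (Finset.univ.filter (σ.r x₀)).Nonempty := ⟨x₀, by simp⟩
  have hVb := unionOfBlocks_filter_rel σ x₀
  have hVc := nonempty_compl_filter_rel_of_ne_top htop x₀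
  set V := Finset.univ.filter (σ.r x₀)
  by_cases hlow : ∃ w ∉ V, ∀ v ∈ V, chiRank χ w < chiRank χ v
  · by_cases hhigh : ∃ w ∉ V, ¬ ∀ v ∈ V, chiRank χ w < chiRank χ v
    · obtain ⟨w, hwV, hw⟩ := hhigh
      obtain ⟨p, hp, hpmax⟩ := Finset.exists_max_image
        (Vᶜ.filter fun x => ∀ v ∈ V, chiRank χ x < chiRank χ v) (chiRank χ)
        (by simpa [Finset.filter_nonempty_iff] using hlow)
      simp only [Finset.mem_filter, Finset.mem_compl] at hp hpmax
      exact eb_swap_of_nest hNest IH hab hχa hχb hσ hZ hc hV hVb hVi hwV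
        ((hVi.forall_lt_or_forall_lt hwV).resolve_left hw) hp.1 hp.2
        fun x hx hxV => hpmax x ⟨hx, hxV⟩
    · push Not at hhigh
      refine eb_swap_of_factor hFac IH hab hχa hχb hσ hZ hc hVc (by simpa using hV) hVb.compl
        fun x hx y hy => ?_
      exact hhigh x (Finset.mem_compl.1 hx) y (by simpa using hy)
  · push Not at hlow
    refine eb_swap_of_factor hFac IH hab hχa hχb hσ hZ hc hV hVc hVb fun x hx y hy => ?_
    obtain ⟨v, hv, hvy⟩ := hlow y hy
    exact ((hVi.forall_lt_or_forall_lt hy).resolve_left fun h => (h v hv).not_ge hvy) x hx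

theorem swapInvariantAt (hTop : AnchorsTop P Eb) (hFac : FactorsOverIntervals P Eb)
    (hNest : NestsOverIntervals P Eb) (m : ℕ) : SwapInvariantAt P Eb m := by
  induction m using Nat.strong_induction_on with
  | _ m IH =>
  intro a b hab χ hχa hχb σ hσ Z hZ hc
  by_cases htop : σ = ⊤
  · subst htop
    exact eb_swap_top hTop hab hc
  · exact eb_swap_of_ne_top hFac hNest IH hab hχa hχb hσ hZ hc htop

end SwapInvariance

def biFreeCumulant {P : BBNCPS B}
    (Eb : (n : ℕ) → (Fin n → Bool) → Setoid (Fin n) → (Fin n → P.A) → B)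
    (μ : (n : ℕ) → (Fin n → Bool) → Setoid (Fin n) → Setoid (Fin n) → ℂ) (n : ℕ)
    (χ : Fin n → Bool) (Z : Fin n → P.A) : B :=
  ∑ᶠ σ ∈ {σ : Setoid (Fin n) | IsBNC χ σ}, μ n χ σ ⊤ • Eb n χ σ Z

theorem biFreeCumulant_comp_swap {P : BBNCPS B}
    {Eb : (n : ℕ) → (Fin n → Bool) → Setoid (Fin n) → (Fin n → P.A) → B}
    {μ : (n : ℕ) → (Fin n → Bool) → Setoid (Fin n) → Setoid (Fin n) → ℂ}
    (hTop : AnchorsTop P Eb) (hFac : FactorsOverIntervals P Eb)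
    (hNest : NestsOverIntervals P Eb) (hμ : MoebiusBNC μ) {n : ℕ} {a b : Fin n}
    (hab : (a : ℕ) + 1 = b) {χ : Fin n → Bool} (hχa : χ a = true) (hχb : χ b = false)
    {Z : Fin n → P.A} (hZ : SideOK P χ Z) (hc : ECommute P (Z a) (Z b)) :
    biFreeCumulant Eb μ n (χ ∘ Equiv.swap a b) (Z ∘ Equiv.swap a b) =
      biFreeCumulant Eb μ n χ Z := by
  have he := chiRank_comp_swap hab (χ := χ) (by simp [hχa, hχb])
  set Φ := Setoid.comapOrderIso (Equiv.swap a b)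
  refine (finsum_mem_eq_of_bijOn Φ (Φ.toEquiv.bijOn fun σ => isBNC_comap_iff he)
    fun σ hσ => ?_).symm
  change _ = μ n _ (σ.comap _) ⊤ • Eb n _ (σ.comap _) _
  rw [hμ.apply_comap_top he hσ, swapInvariantAt hTop hFac hNest n a b hab χ hχa hχb σ hσ Z hZ hc]

/-- Let `(A, E, ε)` be a `B`-`B`-non-commutative probability space,
`χ : {1,…,n} → {ℓ,r}`, and suppose `X ∈ A_ℓ`, `Y ∈ A_r` satisfy
`E(Z X Y Z') = E(Z Y X Z')` for all `Z, Z' ∈ A`.  If `χ(k₀) = ℓ` and `χ(k₀+1) = r`, and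
`χ'` is obtained from `χ` by swapping the values at `k₀` and `k₀+1`, then the bi-free
cumulants satisfy
`κ^B_χ(Z₁,…,Z_{k₀−1}, X, Y, Z_{k₀+2},…,Z_n) = κ^B_{χ'}(Z₁,…,Z_{k₀−1}, Y, X, Z_{k₀+2},…,Z_n)`
for all `Z_k ∈ A_{χ(k)}` (`k ≠ k₀, k₀+1`).

Here `κ^B_χ(Z) = Σ_{σ ∈ BNC(χ)} μ_BNC(σ, 1_χ) E^B_σ(Z)`, with `E^B` the bi-multiplicative
moment function (hypothesized via its characterizing properties) and `μ` the
bi-non-crossing Möbius function. -/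
theorem stmt17 (P : BBNCPS B)
    (Eb : (n : ℕ) → (Fin n → Bool) → Setoid (Fin n) → (Fin n → P.A) → B)
    (μ : (n : ℕ) → (Fin n → Bool) → Setoid (Fin n) → Setoid (Fin n) → ℂ)
    (hTop : AnchorsTop P Eb) (hFac : FactorsOverIntervals P Eb)
    (hNest : NestsOverIntervals P Eb) (hμ : MoebiusBNC μ)
    (n : ℕ) (k₀ : ℕ) (hk : k₀ + 1 < n) (χ : Fin n → Bool)
    (hχ₀ : χ ⟨k₀, by omega⟩ = true) (hχ₁ : χ ⟨k₀ + 1, hk⟩ = false)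
    (X Y : P.A)
    (hX : ∀ b : B, X * P.R (MulOpposite.op b) = P.R (MulOpposite.op b) * X)
    (hY : ∀ b : B, Y * P.L b = P.L b * Y)
    (hcomm : ∀ Zl Zr : P.A, P.E (Zl * X * Y * Zr) = P.E (Zl * Y * X * Zr))
    (Z : Fin n → P.A)
    (hZ : ∀ k : Fin n, (k : ℕ) ≠ k₀ → (k : ℕ) ≠ k₀ + 1 →
      (χ k = true →
        ∀ b : B, Z k * P.R (MulOpposite.op b) = P.R (MulOpposite.op b) * Z k) ∧
      (χ k = false → ∀ b : B, Z k * P.L b = P.L b * Z k)) :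
    (∑ᶠ σ ∈ {σ : Setoid (Fin n) | IsBNC χ σ},
        μ n χ σ ⊤ • Eb n χ σ (fun k =>
          if (k : ℕ) = k₀ then X else if (k : ℕ) = k₀ + 1 then Y else Z k))
      =
    (∑ᶠ σ ∈ {σ : Setoid (Fin n) |
          IsBNC (fun k => if (k : ℕ) = k₀ then false
            else if (k : ℕ) = k₀ + 1 then true else χ k) σ},
        μ n (fun k => if (k : ℕ) = k₀ then false
            else if (k : ℕ) = k₀ + 1 then true else χ k) σ ⊤ •
          Eb n (fun k => if (k : ℕ) = k₀ then false
            else if (k : ℕ) = k₀ + 1 then true else χ k) σ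
            (fun k => if (k : ℕ) = k₀ then Y else if (k : ℕ) = k₀ + 1 then X else Z k)) := by
  set a : Fin n := ⟨k₀, by omega⟩
  set b : Fin n := ⟨k₀ + 1, hk⟩
  set Z₁ : Fin n → P.A := fun k =>
    if (k : ℕ) = k₀ then X else if (k : ℕ) = k₀ + 1 then Y else Z k with hZ₁
  have hZ₁a : Z₁ a = X := by simp [hZ₁, a]
  have hZ₁b : Z₁ b = Y := by simp [hZ₁, b]
  have hside : SideOK P χ Z₁ := by
    intro k
    by_cases h₀ : (k : ℕ) = k₀
    · obtain rfl : k = a := Fin.ext h₀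
      exact ⟨fun _ => hZ₁a ▸ hX, fun h => by simp [hχ₀] at h⟩
    by_cases h₁ : (k : ℕ) = k₀ + 1
    · obtain rfl : k = b := Fin.ext h₁
      exact ⟨fun h => by simp [hχ₁] at h, fun _ => hZ₁b ▸ hY⟩
    simpa [hZ₁, h₀, h₁] using hZ k h₀ h₁
  have hχ' := comp_swap_eq_ite hk χ
  rw [hχ₀, hχ₁] at hχ'
  have hZ' : Z₁ ∘ Equiv.swap a b = fun k : Fin n =>
      if (k : ℕ) = k₀ then Y else if (k : ℕ) = k₀ + 1 then X else Z k := by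
    rw [comp_swap_eq_ite hk Z₁, hZ₁a, hZ₁b]
    funext k
    split_ifs <;> simp [*]
  rw [← hχ', ← hZ']
  exact (biFreeCumulant_comp_swap hTop hFac hNest hμ rfl hχ₀ hχ₁ hside
    (by rwa [hZ₁a, hZ₁b])).symm

end
end

section
/- Let f and g be B-valued formal power series near 0 in a Banach algebra B with f(b) = Σ_{n≥1} E((L_b X)ⁿ) (the moment series Ψ) and suppose Φ(b) = Σ_{n≥1} κ_n(L_bX,…,L_bX) (the cumulant series) satisfies the moment-cumulant relation Ψ(b) = Φ((1+Ψ(b))·b) for b near 0, with E(X) invertible. Then the compositional inverses near 0 satisfy Φ^{⟨-1⟩}(b) = (1+b)·Ψ^{⟨-1⟩}(b); consequently the two definitions of the left operator-valued S-transform, S(b) = b⁻¹Φ^{⟨-1⟩}(b) and S(b) = (1+b)b⁻¹Ψ^{⟨-1⟩}(b), coincide on a neighborhood of 0. -/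
/-!
Substituting `b = Ψ⁻¹(c)` into `Ψ(b) = Φ((1 + Ψ(b))b)` gives `Φ((1 + c)Ψ⁻¹(c)) = c`, so
`c ↦ (1 + c)Ψ⁻¹(c)` is a right inverse of `Φ`, continuous at `0`; composing with the left
inverse `Φ⁻¹` shows that the two agree near `0`.
-/

open Filter Topology

theorem Filter.EventuallyEq.of_leftInverse_of_rightInverse {α β : Type*} [TopologicalSpace α]
    [TopologicalSpace β] {Φ : β → α} {ΦInv g : α → β} {a : α} (hg : ContinuousAt g a)
    (hΦr : ∀ᶠ y in 𝓝 (g a), ΦInv (Φ y) = y) (hΦg : ∀ᶠ x in 𝓝 a, Φ (g x) = x) :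
    ΦInv =ᶠ[𝓝 a] g := by
  filter_upwards [hg.eventually hΦr, hΦg] with x hleft hright
  rw [← hleft, hright]

theorem eventually_apply_one_add_mul_rightInverse {R : Type*} [Add R] [Mul R] [One R]
    [TopologicalSpace R] {Ψ Φ ΨInv : R → R} {a : R} (hΨInv : ContinuousAt ΨInv a)
    (hΨl : ∀ᶠ b in 𝓝 a, Ψ (ΨInv b) = b)
    (heq : ∀ᶠ b in 𝓝 (ΨInv a), Ψ b = Φ ((1 + Ψ b) * b)) :
    ∀ᶠ b in 𝓝 a, Φ ((1 + b) * ΨInv b) = b := by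
  filter_upwards [hΨInv.eventually heq, hΨl] with b hrel hright
  rwa [hright, eq_comm] at hrel

theorem stmt19_general {B : Type} [NormedRing B]
    (Ψ Φ ΨInv ΦInv : B → B)
    (hΨInv0 : ΨInv 0 = 0)
    (hΨInvC : ContinuousAt ΨInv 0)
    (hΨl : ∀ᶠ b in nhds (0 : B), Ψ (ΨInv b) = b)
    (hΦr : ∀ᶠ b in nhds (0 : B), ΦInv (Φ b) = b)
    (heq : ∀ᶠ b in nhds (0 : B), Ψ b = Φ ((1 + Ψ b) * b)) :
    ∀ᶠ b in nhds (0 : B), ΦInv b = (1 + b) * ΨInv b := by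
  have hg : ContinuousAt (fun b => (1 + b) * ΨInv b) 0 :=
    (continuousAt_const.add continuousAt_id).mul hΨInvC
  have hg0 : (1 + 0) * ΨInv 0 = 0 := by rw [hΨInv0, mul_zero]
  refine EventuallyEq.of_leftInverse_of_rightInverse hg (by rwa [hg0]) ?_
  exact eventually_apply_one_add_mul_rightInverse hΨInvC hΨl (by rwa [hΨInv0])

/-- Let `Ψ` (the moment series `Ψ(b) = Σ_{n≥1} E((L_b X)ⁿ)`) and `Φ`
(the cumulant series) be `B`-valued analytic functions near `0` in a Banach algebra `B`,
vanishing at `0`, with Fréchet derivative at `0` equal to `c ↦ c·E(X)` where `x = E(X)` is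
invertible, and suppose the moment–cumulant relation `Ψ(b) = Φ((1+Ψ(b))·b)` holds for `b`
near `0`.  Let `ΨInv` and `ΦInv` be the local compositional inverses of `Ψ` and `Φ` near
`0`.  Then `Φ^{⟨-1⟩}(b) = (1+b)·Ψ^{⟨-1⟩}(b)` near `0`; consequently the two definitions of
the left operator-valued `S`-transform, `S(b) = b⁻¹Φ^{⟨-1⟩}(b)` and
`S(b) = (1+b)b⁻¹Ψ^{⟨-1⟩}(b)`, coincide on a neighborhood of `0`. -/
theorem stmt19 {B : Type} [NormedRing B] [NormedAlgebra ℂ B] [CompleteSpace B]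
    (Ψ Φ ΨInv ΦInv : B → B) (x : Bˣ)
    (hΨa : AnalyticAt ℂ Ψ 0) (hΦa : AnalyticAt ℂ Φ 0)
    (hΨ0 : Ψ 0 = 0) (hΦ0 : Φ 0 = 0)
    (fΨ fΦ : B →L[ℂ] B)
    (hfΨ : ∀ c : B, fΨ c = c * (x : B)) (hfΦ : ∀ c : B, fΦ c = c * (x : B))
    (hdΨ : HasFDerivAt Ψ fΨ 0) (hdΦ : HasFDerivAt Φ fΦ 0)
    (hΨInv0 : ΨInv 0 = 0) (hΦInv0 : ΦInv 0 = 0)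
    (hΨInvC : ContinuousAt ΨInv 0) (hΦInvC : ContinuousAt ΦInv 0)
    (hΨl : ∀ᶠ b in nhds (0 : B), Ψ (ΨInv b) = b)
    (hΨr : ∀ᶠ b in nhds (0 : B), ΨInv (Ψ b) = b)
    (hΦl : ∀ᶠ b in nhds (0 : B), Φ (ΦInv b) = b)
    (hΦr : ∀ᶠ b in nhds (0 : B), ΦInv (Φ b) = b)
    (heq : ∀ᶠ b in nhds (0 : B), Ψ b = Φ ((1 + Ψ b) * b)) :
    ∀ᶠ b in nhds (0 : B), ΦInv b = (1 + b) * ΨInv b :=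
  stmt19_general Ψ Φ ΨInv ΦInv hΨInv0 hΨInvC hΨl hΦr heq
end
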